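/- arXiv:1409.7445 — 10 statements merged into one kernel-verified Lean document; each statement's English description precedes it below -/
import Mathlib

section
/- There exists a family (S_n)_{n≥1} of polynomials with integer coefficients in the indeterminates (X_d)_{d≥1} and (Y_d)_{d≥1}, such that each S_n involves only the variables X_d and Y_d with d dividing n, and for every n ≥ 1 the identity Σ_{d ∣ n} d·S_d^{n/d} = Σ_{d ∣ n} d·X_d^{n/d} + Σ_{d ∣ n} d·Y_d^{n/d} holds in the polynomial ring ℤ[X_d, Y_d : d ≥ 1]. Moreover, this family is unique (its images in ℚ[X_d, Y_d : d ≥ 1] are uniquely determined by these equations). -/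
open MvPolynomial

/-- The `n`-th big Witt polynomial `w_n(F) = ∑_{d ∣ n} d · (F d)^{n/d}` evaluated
at a family of polynomials `F`. -/
noncomputable def wittEval (F : ℕ → MvPolynomial (ℕ ⊕ ℕ) ℤ) (n : ℕ) :
    MvPolynomial (ℕ ⊕ ℕ) ℤ :=
  ∑ d ∈ n.divisors, (C (d : ℤ)) * (F d) ^ (n / d)

namespace BigWittAux

noncomputable section

def gg (n : ℕ) : MvPolynomial (ℕ ⊕ ℕ) ℤ :=
  wittEval (fun d => X (Sum.inl d)) n + wittEval (fun d => X (Sum.inr d)) n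

def toQ : MvPolynomial (ℕ ⊕ ℕ) ℤ →+* MvPolynomial (ℕ ⊕ ℕ) ℚ :=
  MvPolynomial.map (Int.castRingHom ℚ)

lemma toQ_injective : Function.Injective toQ :=
  MvPolynomial.map_injective _ Int.cast_injective

def wQ (F : ℕ → MvPolynomial (ℕ ⊕ ℕ) ℚ) (n : ℕ) : MvPolynomial (ℕ ⊕ ℕ) ℚ :=
  ∑ d ∈ n.divisors, (C (d : ℚ)) * (F d) ^ (n / d)

lemma toQ_wittEval (F : ℕ → MvPolynomial (ℕ ⊕ ℕ) ℤ) (n : ℕ) :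
    toQ (wittEval F n) = wQ (fun d => toQ (F d)) n := by
  simp [wittEval, wQ, toQ, map_sum]

def sQ : ℕ → MvPolynomial (ℕ ⊕ ℕ) ℚ
  | n => C ((n : ℚ)⁻¹) * (toQ (gg n) -
      ∑ d ∈ n.properDivisors.attach, C (((d : ℕ)) : ℚ) * (sQ d) ^ (n / (d : ℕ)))
  decreasing_by exact (Nat.mem_properDivisors.mp d.2).2

lemma sQ_spec (n : ℕ) : sQ n = C ((n : ℚ)⁻¹) * (toQ (gg n) -
    ∑ d ∈ n.properDivisors, C ((d : ℕ) : ℚ) * (sQ d) ^ (n / d)) := by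
  rw [sQ, ← Finset.sum_attach n.properDivisors (fun d => C ((d : ℕ) : ℚ) * (sQ d) ^ (n / d))]

lemma ghostQ (n : ℕ) (hn : 1 ≤ n) : wQ sQ n = toQ (gg n) := by
  have h0 : (n : ℚ) ≠ 0 := Nat.cast_ne_zero.mpr (by omega)
  rw [wQ, ← Nat.insert_self_properDivisors (by omega : n ≠ 0),
    Finset.sum_insert Nat.self_notMem_properDivisors, Nat.div_self (by omega),
    pow_one, sQ_spec n, ← mul_assoc, ← C_mul, mul_inv_cancel₀ h0, C_1, one_mul]
  ring

lemma ord_proj_dvd_of_not_dvd_div {n d p : ℕ} (hp : p.Prime) (hpn : p ∣ n) (hn : n ≠ 0)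
    (hd : d ∣ n) (h : ¬ d ∣ n / p) : p ^ n.factorization p ∣ d := by
  have hd0 : d ≠ 0 := fun h0 => hn (by simpa [h0] using hd)
  have hm0 : n / p ≠ 0 :=
    Nat.div_ne_zero_iff.mpr ⟨hp.ne_zero, Nat.le_of_dvd (by omega) hpn⟩
  by_contra hcon
  apply h
  rw [← Nat.factorization_le_iff_dvd hd0 hm0, Nat.factorization_div hpn, hp.factorization]
  have hle := (Nat.factorization_le_iff_dvd hd0 hn).mpr hd
  have hlt : d.factorization p < n.factorization p := by
    by_contra hge
    exact hcon ((Nat.Prime.pow_dvd_iff_le_factorization hp hd0).mpr (by omega))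
  intro q
  rw [Finsupp.tsub_apply, Finsupp.single_apply]
  rcases eq_or_ne p q with rfl | hpq
  · simpa using by omega
  · simpa [hpq] using hle q

lemma val_add {n m d p : ℕ} (hp : p.Prime) (hpn : p ∣ n) (hn : n ≠ 0) (hm : m = n / p)
    (hd : d ∣ m) :
    d.factorization p + ((m / d).factorization p + 1) = n.factorization p := by
  have hm0 : m ≠ 0 := by
    subst hm; exact Nat.div_ne_zero_iff.mpr ⟨hp.ne_zero, Nat.le_of_dvd (by omega) hpn⟩
  have hd0 : d ≠ 0 := fun h0 => hm0 (by simpa [h0] using hd)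
  have hmd0 : m / d ≠ 0 := Nat.div_ne_zero_iff.mpr ⟨hd0, Nat.le_of_dvd (by omega) hd⟩
  have h1 : n = m * p := by subst hm; exact (Nat.div_mul_cancel hpn).symm
  have h2 : m = d * (m / d) := (Nat.mul_div_cancel' hd).symm
  have e1 : n.factorization p = m.factorization p + 1 := by
    rw [h1, Nat.factorization_mul hm0 hp.ne_zero, hp.factorization]; simp
  have e2 : m.factorization = d.factorization + (m / d).factorization := by
    conv_lhs => rw [h2]
    exact Nat.factorization_mul hd0 hmd0
  have e2' : m.factorization p = d.factorization p + (m / d).factorization p := by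
    rw [e2]; simp
  omega

lemma frob_cong (p : ℕ) (hp : p.Prime) (f : MvPolynomial (ℕ ⊕ ℕ) ℤ) :
    C (p : ℤ) ∣ f ^ p - expand p f := by
  haveI : Fact p.Prime := ⟨hp⟩
  rw [show ((p:ℤ)) = (((p:ℕ)):ℤ) from rfl, C_dvd_iff_zmod, map_sub, map_pow, map_expand,
    expand_zmod, sub_self]

lemma pow_cong (p : ℕ) (hp : p.Prime) (f : MvPolynomial (ℕ ⊕ ℕ) ℤ) (j c : ℕ) :
    C ((p : ℤ) ^ (j + 1)) ∣ f ^ (p ^ (j + 1) * c) - (expand p f) ^ (p ^ j * c) := by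
  have h1 : ((p : MvPolynomial (ℕ ⊕ ℕ) ℤ)) ∣ f ^ p - expand p f := by
    have := frob_cong p hp f
    rwa [show (C (p:ℤ) : MvPolynomial (ℕ ⊕ ℕ) ℤ) = (p : MvPolynomial (ℕ ⊕ ℕ) ℤ) from
      map_natCast C p] at this
  have h2 := dvd_sub_pow_of_dvd_sub h1 j
  have h3 := dvd_trans h2 (sub_dvd_pow_sub_pow ((f ^ p) ^ p ^ j) ((expand p f) ^ p ^ j) c)
  rw [show (C ((p:ℤ)^(j+1)) : MvPolynomial (ℕ ⊕ ℕ) ℤ)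
      = ((p : MvPolynomial (ℕ ⊕ ℕ) ℤ)) ^ (j+1) by rw [C_pow, map_natCast C p]]
  calc ((p : MvPolynomial (ℕ ⊕ ℕ) ℤ)) ^ (j+1) ∣ _ := h3
  _ = f ^ (p ^ (j + 1) * c) - (expand p f) ^ (p ^ j * c) := by
      simp only [← pow_mul]
      congr 2
      ring

lemma mdiv_subset_proper {n p : ℕ} (hp : p.Prime) (hpn : p ∣ n) (hn : 1 ≤ n) :
    (n / p).divisors ⊆ n.properDivisors := by
  intro d hd
  rw [Nat.mem_divisors] at hd
  rw [Nat.mem_properDivisors]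
  have hm : n / p < n := Nat.div_lt_self (by omega) hp.one_lt
  exact ⟨hd.1.trans (Nat.div_dvd_of_dvd hpn),
    lt_of_le_of_lt (Nat.le_of_dvd (Nat.pos_of_ne_zero hd.2) hd.1) hm⟩

lemma ndiv_eq {n p d : ℕ} (hp : p.Prime) (hpn : p ∣ n) (hn : 1 ≤ n) (hd : d ∣ n / p) :
    n / d = p * (n / p / d) := by
  rw [← Nat.mul_div_assoc p hd, Nat.mul_div_cancel' hpn]

lemma key_h1 (n p : ℕ) (hp : p.Prime) (hpn : p ∣ n) (hn : 1 ≤ n) (ι : ℕ → ℕ ⊕ ℕ) :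
    C ((p:ℤ) ^ n.factorization p) ∣
      wittEval (fun d => X (ι d)) n - expand p (wittEval (fun d => X (ι d)) (n / p)) := by
  have hm0 : n / p ≠ 0 :=
    Nat.div_ne_zero_iff.mpr ⟨hp.ne_zero, Nat.le_of_dvd (by omega) hpn⟩
  have hexp : expand p (wittEval (fun d => X (ι d)) (n / p))
      = ∑ d ∈ (n / p).divisors, C (d:ℤ) * (X (ι d)) ^ (n / d) := by
    rw [wittEval, map_sum]
    refine Finset.sum_congr rfl fun d hd => ?_
    rw [Nat.mem_divisors] at hd
    rw [map_mul, expand_C, map_pow, expand_X, ← pow_mul, ndiv_eq hp hpn hn hd.1, mul_comm]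
  have hsub : (n / p).divisors ⊆ n.divisors :=
    Nat.divisors_subset_of_dvd (by omega) (Nat.div_dvd_of_dvd hpn)
  rw [wittEval, hexp, ← Finset.sum_sdiff hsub, add_sub_cancel_right]
  refine Finset.dvd_sum fun d hd => ?_
  rw [Finset.mem_sdiff, Nat.mem_divisors] at hd
  have hdm : ¬ d ∣ n / p := fun hc => hd.2 (Nat.mem_divisors.mpr ⟨hc, hm0⟩)
  have hdvd : p ^ n.factorization p ∣ d :=
    ord_proj_dvd_of_not_dvd_div hp hpn (by omega) hd.1.1 hdm
  have : (C ((p:ℤ) ^ n.factorization p) : MvPolynomial (ℕ ⊕ ℕ) ℤ) ∣ C (d:ℤ) := by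
    apply map_dvd C
    exact_mod_cast Int.natCast_dvd_natCast.mpr hdvd
  exact this.mul_right _

lemma prime_pow_dvd_key (n p : ℕ) (hp : p.Prime) (hpn : p ∣ n) (hn : 1 ≤ n)
    (S : ℕ → MvPolynomial (ℕ ⊕ ℕ) ℤ)
    (hgh : ∑ d ∈ (n / p).divisors, C (d:ℤ) * (S d) ^ (n / p / d) = gg (n / p)) :
    C ((p:ℤ) ^ n.factorization p) ∣
      gg n - ∑ d ∈ n.properDivisors, C (d:ℤ) * (S d) ^ (n / d) := by
  have hm0 : n / p ≠ 0 :=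
    Nat.div_ne_zero_iff.mpr ⟨hp.ne_zero, Nat.le_of_dvd (by omega) hpn⟩
  have key : gg n - ∑ d ∈ n.properDivisors, C (d:ℤ) * S d ^ (n / d)
      = (gg n - expand p (gg (n / p)))
        + ((expand p (∑ d ∈ (n / p).divisors, C (d:ℤ) * S d ^ (n / p / d))
            - ∑ d ∈ n.properDivisors, C (d:ℤ) * S d ^ (n / d))) := by
    rw [hgh]; ring
  rw [key]
  refine dvd_add ?_ ?_
  · have h1 := key_h1 n p hp hpn hn Sum.inl
    have h2 := key_h1 n p hp hpn hn Sum.inr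
    have e : gg n - expand p (gg (n / p))
        = (wittEval (fun d => X (Sum.inl d)) n
            - expand p (wittEval (fun d => X (Sum.inl d)) (n / p)))
          + (wittEval (fun d => X (Sum.inr d)) n
            - expand p (wittEval (fun d => X (Sum.inr d)) (n / p))) := by
      rw [gg, gg, map_add]; ring
    rw [e]
    exact dvd_add h1 h2
  · rw [map_sum, ← Finset.sum_sdiff (mdiv_subset_proper hp hpn hn)]
    have e : (∑ d ∈ (n / p).divisors, expand p (C (d:ℤ) * S d ^ (n / p / d)))
        - ((∑ d ∈ n.properDivisors \ (n / p).divisors, C (d:ℤ) * S d ^ (n / d))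
           + ∑ d ∈ (n / p).divisors, C (d:ℤ) * S d ^ (n / d))
      = (∑ d ∈ (n / p).divisors,
          (expand p (C (d:ℤ) * S d ^ (n / p / d)) - C (d:ℤ) * S d ^ (n / d)))
        - ∑ d ∈ n.properDivisors \ (n / p).divisors, C (d:ℤ) * S d ^ (n / d) := by
      rw [Finset.sum_sub_distrib]; ring
    rw [e]
    refine dvd_sub (Finset.dvd_sum fun d hd => ?_) (Finset.dvd_sum fun d hd => ?_)
    · rw [Nat.mem_divisors] at hd
      set a := d.factorization p with ha
      set j := ((n / p) / d).factorization p with hj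
      set c := ((n / p) / d) / p ^ j with hc
      have hmd : (n / p) / d = p ^ j * c := (Nat.ordProj_mul_ordCompl_eq_self _ p).symm
      have hnd : n / d = p ^ (j + 1) * c := by
        rw [ndiv_eq hp hpn hn hd.1, hmd, ← mul_assoc, ← pow_succ']
      have haj : a + (j + 1) = n.factorization p :=
        val_add hp hpn (by omega) rfl hd.1
      have hCC : (C ((p:ℤ) ^ n.factorization p) : MvPolynomial (ℕ ⊕ ℕ) ℤ)
          = C ((p:ℤ) ^ a) * C ((p:ℤ) ^ (j + 1)) := by
        rw [← C_mul, ← pow_add, haj]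
      rw [map_mul, expand_C, map_pow (expand p) (S d) (n / p / d), hmd, hnd, hCC]
      have hda : (C ((p:ℤ) ^ a) : MvPolynomial (ℕ ⊕ ℕ) ℤ) ∣ C (d:ℤ) := by
        apply map_dvd C
        exact_mod_cast Int.natCast_dvd_natCast.mpr (Nat.ordProj_dvd d p)
      have hcong : (C ((p:ℤ) ^ (j + 1)) : MvPolynomial (ℕ ⊕ ℕ) ℤ) ∣
          (expand p (S d)) ^ (p ^ j * c) - S d ^ (p ^ (j + 1) * c) :=
        (dvd_sub_comm).mp (pow_cong p hp (S d) j c)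
      have := mul_dvd_mul hda hcong
      calc C ((p:ℤ)^a) * C ((p:ℤ)^(j+1)) ∣ _ := this
      _ = C (d:ℤ) * (expand p (S d)) ^ (p ^ j * c) - C (d:ℤ) * S d ^ (p ^ (j+1) * c) := by
          ring
    · rw [Finset.mem_sdiff, Nat.mem_properDivisors] at hd
      have hdm : ¬ d ∣ n / p := fun hc => hd.2 (Nat.mem_divisors.mpr ⟨hc, hm0⟩)
      have hdvd : p ^ n.factorization p ∣ d :=
        ord_proj_dvd_of_not_dvd_div hp hpn (by omega) hd.1.1 hdm
      have : (C ((p:ℤ) ^ n.factorization p) : MvPolynomial (ℕ ⊕ ℕ) ℤ) ∣ C (d:ℤ) := by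
        apply map_dvd C
        exact_mod_cast Int.natCast_dvd_natCast.mpr hdvd
      exact this.mul_right _

lemma dvd_int_of_primes {z : MvPolynomial (ℕ ⊕ ℕ) ℤ} {n : ℕ} (hn : n ≠ 0)
    (h : ∀ p ∈ n.primeFactors, C ((p:ℤ) ^ n.factorization p) ∣ z) :
    C ((n:ℤ)) ∣ z := by
  have hfact : (∏ p ∈ n.primeFactors, p ^ n.factorization p) = n := by
    have := Nat.factorization_prod_pow_eq_self hn
    rwa [Finsupp.prod, Nat.support_factorization] at this
  have hC : (C ((n:ℤ)) : MvPolynomial (ℕ ⊕ ℕ) ℤ)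
      = ∏ p ∈ n.primeFactors, C ((p:ℤ) ^ n.factorization p) := by
    have hint : ((n:ℤ)) = ∏ p ∈ n.primeFactors, (p:ℤ) ^ n.factorization p := by
      exact_mod_cast (congrArg (fun t : ℕ => (t : ℤ)) hfact).symm
    rw [hint, map_prod]
  rw [hC]
  apply Finset.prod_dvd_of_coprime
  · intro p hp q hq hpq
    simp only [Function.onFun]
    have hpp := Nat.prime_of_mem_primeFactors (Finset.mem_coe.mp hp)
    have hqq := Nat.prime_of_mem_primeFactors (Finset.mem_coe.mp hq)
    have hco : Nat.Coprime (p ^ n.factorization p) (q ^ n.factorization q) :=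
      Nat.Coprime.pow (n.factorization p) (n.factorization q)
        ((Nat.coprime_primes hpp hqq).mpr hpq)
    have hic : IsCoprime ((p:ℤ) ^ n.factorization p) ((q:ℤ) ^ n.factorization q) := by
      exact_mod_cast Nat.isCoprime_iff_coprime.mpr hco
    exact hic.map C
  · exact fun p hp => h p hp

lemma dvd_key (n : ℕ) (hn : 1 ≤ n) (S : ℕ → MvPolynomial (ℕ ⊕ ℕ) ℤ)
    (hS : ∀ d ∈ n.properDivisors, toQ (S d) = sQ d) :
    C ((n:ℤ)) ∣ gg n - ∑ d ∈ n.properDivisors, C (d:ℤ) * S d ^ (n / d) := by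
  apply dvd_int_of_primes (by omega)
  intro p hp
  have hpp := Nat.prime_of_mem_primeFactors hp
  have hpn := Nat.dvd_of_mem_primeFactors hp
  apply prime_pow_dvd_key n p hpp hpn hn S
  apply toQ_injective
  have h1 : toQ (∑ d ∈ (n / p).divisors, C (d:ℤ) * S d ^ (n / p / d)) = wQ sQ (n / p) := by
    rw [map_sum]
    refine Finset.sum_congr rfl fun d hd => ?_
    rw [map_mul, map_pow, hS d (mdiv_subset_proper hpp hpn hn hd)]
    congr 1
    rw [toQ, map_C]
    simp
  have hm0 : n / p ≠ 0 :=
    Nat.div_ne_zero_iff.mpr ⟨hpp.ne_zero, Nat.le_of_dvd (by omega) hpn⟩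
  rw [h1, ghostQ (n / p) (Nat.one_le_iff_ne_zero.mpr hm0)]

lemma toQ_C (d : ℕ) : toQ (C (d:ℤ)) = C ((d:ℕ):ℚ) := by
  rw [toQ, map_C]; simp

lemma integral (n : ℕ) : ∃ T : MvPolynomial (ℕ ⊕ ℕ) ℤ, toQ T = sQ n := by
  induction n using Nat.strong_induction_on with
  | _ n IH =>
    rcases Nat.eq_zero_or_pos n with rfl | hn
    · refine ⟨0, ?_⟩
      rw [sQ_spec]
      simp
    · set S : ℕ → MvPolynomial (ℕ ⊕ ℕ) ℤ :=
        fun d => if h : d < n then (IH d h).choose else 0 with hSdef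
      have hS : ∀ d ∈ n.properDivisors, toQ (S d) = sQ d := by
        intro d hd
        have hlt := (Nat.mem_properDivisors.mp hd).2
        simp only [hSdef, dif_pos hlt]
        exact (IH d hlt).choose_spec
      obtain ⟨T, hT⟩ := dvd_key n hn S hS
      refine ⟨T, ?_⟩
      have e1 : toQ (∑ d ∈ n.properDivisors, C (d:ℤ) * S d ^ (n / d))
          = ∑ d ∈ n.properDivisors, C ((d:ℕ):ℚ) * sQ d ^ (n / d) := by
        rw [map_sum]
        refine Finset.sum_congr rfl fun d hd => ?_
        rw [map_mul, map_pow, hS d hd, toQ_C]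
      have e2 := congrArg toQ hT
      rw [map_sub, e1, map_mul, toQ_C] at e2
      have h0 : ((n:ℕ) : ℚ) ≠ 0 := Nat.cast_ne_zero.mpr (by omega)
      rw [sQ_spec, e2, ← mul_assoc, ← C_mul, inv_mul_cancel₀ h0, C_1, one_mul]

lemma sQ_supported (n : ℕ) :
    sQ n ∈ supported ℚ {v : ℕ ⊕ ℕ | Sum.elim id id v ∣ n} := by
  induction n using Nat.strong_induction_on with
  | _ n IH =>
    rw [sQ_spec]
    apply Subalgebra.mul_mem
    · rw [← MvPolynomial.algebraMap_eq]
      exact Subalgebra.algebraMap_mem _ _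
    · apply Subalgebra.sub_mem
      · have hgen : ∀ ι : ℕ → ℕ ⊕ ℕ, (∀ d, d ∣ n → Sum.elim id id (ι d) ∣ n) →
            toQ (wittEval (fun d => X (ι d)) n)
              ∈ supported ℚ {v : ℕ ⊕ ℕ | Sum.elim id id v ∣ n} := by
          intro ι hι
          rw [toQ_wittEval, wQ]
          apply Subalgebra.sum_mem
          intro d hd
          apply Subalgebra.mul_mem
          · rw [← MvPolynomial.algebraMap_eq]
            exact Subalgebra.algebraMap_mem _ _
          · apply Subalgebra.pow_mem
            have : toQ (X (ι d)) = X (ι d) := by rw [toQ, map_X]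
            rw [this]
            exact X_mem_supported.mpr (hι d (Nat.dvd_of_mem_divisors hd))
        rw [gg, map_add]
        exact Subalgebra.add_mem _ (hgen Sum.inl (by intro d hd; simpa using hd))
          (hgen Sum.inr (by intro d hd; simpa using hd))
      · apply Subalgebra.sum_mem
        intro d hd
        apply Subalgebra.mul_mem
        · rw [← MvPolynomial.algebraMap_eq]
          exact Subalgebra.algebraMap_mem _ _
        · apply Subalgebra.pow_mem
          have hlt := (Nat.mem_properDivisors.mp hd).2
          have hdvd := (Nat.mem_properDivisors.mp hd).1
          refine supported_mono ?_ (IH d hlt)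
          intro v hv
          exact dvd_trans hv hdvd

def SS (n : ℕ) : MvPolynomial (ℕ ⊕ ℕ) ℤ := (integral n).choose

lemma SS_spec (n : ℕ) : toQ (SS n) = sQ n := (integral n).choose_spec

lemma SS_ghost (n : ℕ) (hn : 1 ≤ n) : wittEval SS n = gg n := by
  apply toQ_injective
  rw [toQ_wittEval]
  have hfun : (fun d => toQ (SS d)) = sQ := funext fun d => SS_spec d
  rw [hfun, ghostQ n hn]

lemma SS_vars (n : ℕ) : ∀ v ∈ (SS n).vars, Sum.elim id id v ∣ n := by
  intro v hv
  have hvars : (SS n).vars = (sQ n).vars := by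
    rw [← SS_spec n, show toQ (SS n) = MvPolynomial.map (Int.castRingHom ℚ) (SS n) from rfl]
    exact (MvPolynomial.vars_map_of_injective _ (by exact Int.cast_injective)).symm
  have hsup := sQ_supported n
  rw [MvPolynomial.mem_supported] at hsup
  exact hsup (by rw [← hvars]; exact hv)

lemma wittEval_eq (F : ℕ → MvPolynomial (ℕ ⊕ ℕ) ℤ) (n : ℕ) (hn : 1 ≤ n) :
    wittEval F n = C (n:ℤ) * F n + ∑ d ∈ n.properDivisors, C (d:ℤ) * F d ^ (n / d) := by
  rw [wittEval, ← Nat.insert_self_properDivisors (by omega : n ≠ 0),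
    Finset.sum_insert Nat.self_notMem_properDivisors, Nat.div_self (by omega), pow_one]

lemma SS_uniq (S' : ℕ → MvPolynomial (ℕ ⊕ ℕ) ℤ)
    (h : ∀ n, 1 ≤ n → wittEval S' n = gg n) : ∀ n, 1 ≤ n → S' n = SS n := by
  intro n
  induction n using Nat.strong_induction_on with
  | _ n IH =>
    intro hn
    have h1 := h n hn
    have h2 := SS_ghost n hn
    rw [wittEval_eq S' n hn] at h1
    rw [wittEval_eq SS n hn] at h2
    have hsum : ∑ d ∈ n.properDivisors, C (d:ℤ) * S' d ^ (n / d)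
        = ∑ d ∈ n.properDivisors, C (d:ℤ) * SS d ^ (n / d) := by
      refine Finset.sum_congr rfl fun d hd => ?_
      rw [IH d (Nat.mem_properDivisors.mp hd).2 (Nat.pos_of_mem_properDivisors hd)]
    rw [hsum] at h1
    have hCn : (C (n:ℤ) : MvPolynomial (ℕ ⊕ ℕ) ℤ) ≠ 0 := by
      rw [Ne, MvPolynomial.C_eq_zero]
      exact_mod_cast (by omega : n ≠ 0)
    have := h1.trans h2.symm
    exact mul_left_cancel₀ hCn (by linear_combination this)

end
end BigWittAux


/-- **Universal addition polynomials for the big Witt vectors.**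
There is a family `S` of integer polynomials in variables `X_d = X (Sum.inl d)` and
`Y_d = X (Sum.inr d)`, with `S n` involving only variables of index dividing `n`, such that
`w_n(S) = w_n(X) + w_n(Y)` for all `n ≥ 1`; moreover the family is uniquely determined (for
`n ≥ 1`) by these equations. -/
theorem big_witt_addition_polynomials :
    ∃ S : ℕ → MvPolynomial (ℕ ⊕ ℕ) ℤ,
      (∀ n, 1 ≤ n → ∀ v ∈ (S n).vars, Sum.elim id id v ∣ n) ∧
      (∀ n, 1 ≤ n →
        wittEval S n =
          wittEval (fun d => X (Sum.inl d)) n + wittEval (fun d => X (Sum.inr d)) n) ∧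
      (∀ S' : ℕ → MvPolynomial (ℕ ⊕ ℕ) ℤ,
        (∀ n, 1 ≤ n →
          wittEval S' n =
            wittEval (fun d => X (Sum.inl d)) n + wittEval (fun d => X (Sum.inr d)) n) →
        ∀ n, 1 ≤ n → S' n = S n) := by
  refine ⟨BigWittAux.SS, fun n _ => BigWittAux.SS_vars n, fun n hn => BigWittAux.SS_ghost n hn,
    fun S' hS' n hn => BigWittAux.SS_uniq S' (fun m hm => hS' m hm) n hn⟩
end

section
/- Let A be a commutative ring and let f ∈ A[[t]] be a formal power series with constant coefficient 1. Then there exists a unique sequence (y_n)_{n≥1} of elements of A such that for every N ≥ 1, the power series f and the finite product ∏_{n=1}^{N} (1 − y_n·t^n) have equal coefficients in every degree ≤ N (equivalently, f = ∏_{n=1}^{∞} (1 − y_n·t^n) as a t-adically convergent infinite product). -/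
open PowerSeries

section Aux

variable {A : Type*} [CommRing A]

private lemma coeff_mul_one_sub_of_lt (g : PowerSeries A) (a : A) {m n : ℕ} (h : m < n) :
    coeff (R := A) m (g * (1 - C (R := A) a * X ^ n)) = coeff (R := A) m g := by
  rw [mul_sub, mul_one, map_sub, show g * (C (R := A) a * X ^ n) = g * C (R := A) a * X ^ n by ring,
    coeff_mul_X_pow', if_neg (by omega), sub_zero]

private lemma coeff_mul_one_sub_self (g : PowerSeries A) (a : A) (n : ℕ) :
    coeff (R := A) n (g * (1 - C (R := A) a * X ^ n)) = coeff (R := A) n g - constantCoeff (R := A) g * a := by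
  rw [mul_sub, mul_one, map_sub, show g * (C (R := A) a * X ^ n) = g * C (R := A) a * X ^ n by ring,
    coeff_mul_X_pow', if_pos le_rfl, Nat.sub_self, coeff_zero_eq_constantCoeff, map_mul,
    constantCoeff_C]

private lemma constantCoeff_prod (y : ℕ → A) (N : ℕ) :
    constantCoeff (R := A) (∏ n ∈ Finset.Icc 1 N, (1 - C (R := A) (y n) * X ^ n)) = 1 := by
  rw [map_prod]
  refine Finset.prod_eq_one fun n hn => ?_
  rw [Finset.mem_Icc] at hn
  rw [map_sub, map_one, map_mul, constantCoeff_C, map_pow, constantCoeff_X,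
    zero_pow (by omega), mul_zero, sub_zero]

/-- The recursively defined coefficient sequence. -/
private noncomputable def seq (f : PowerSeries A) : ℕ → A
  | N => coeff (R := A) N (∏ n ∈ (Finset.Icc 1 (N - 1)).attach,
      (1 - C (R := A) (seq f n.1) * X ^ (n.1 : ℕ))) - coeff (R := A) N f
decreasing_by
  have := n.2; rw [Finset.mem_Icc] at this; omega

private lemma seq_def (f : PowerSeries A) (N : ℕ) :
    seq f N = coeff (R := A) N (∏ n ∈ Finset.Icc 1 (N - 1),
      (1 - C (R := A) (seq f n) * X ^ n)) - coeff (R := A) N f := by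
  rw [seq]
  congr 2
  exact Finset.prod_attach _ fun k => 1 - C (R := A) (seq f k) * X ^ k

end Aux

/-- Every power series with constant coefficient `1` over a commutative ring `A` can be
written uniquely as a (t-adically convergent) infinite product `∏_{n ≥ 1} (1 - y_n t^n)`:
there is a sequence `(y_n)_{n ≥ 1}` such that for every `N ≥ 1` the coefficients of `f`
and of `∏_{n=1}^N (1 - y_n t^n)` agree in all degrees `≤ N`, and any two such sequences
agree in all indices `n ≥ 1`. -/
theorem powerSeries_eq_unique_product {A : Type*} [CommRing A] (f : PowerSeries A)
    (hf : constantCoeff (R := A) f = 1) :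
    ∃ y : ℕ → A,
      (∀ N, 1 ≤ N → ∀ m ≤ N,
        coeff (R := A) m f =
          coeff (R := A) m (∏ n ∈ Finset.Icc 1 N, (1 - C (R := A) (y n) * X ^ n))) ∧
      (∀ y' : ℕ → A,
        (∀ N, 1 ≤ N → ∀ m ≤ N,
          coeff (R := A) m f =
            coeff (R := A) m (∏ n ∈ Finset.Icc 1 N, (1 - C (R := A) (y' n) * X ^ n))) →
        ∀ n, 1 ≤ n → y' n = y n) := by
  set y := seq f with hy
  set P : ℕ → PowerSeries A := fun N => ∏ n ∈ Finset.Icc 1 N, (1 - C (R := A) (y n) * X ^ n) with hP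
  have hstep : ∀ N, P (N + 1) = P N * (1 - C (R := A) (y (N + 1)) * X ^ (N + 1)) := fun N => by
    simp only [hP]
    rw [Finset.prod_Icc_succ_top (by omega)]
  -- existence
  have hex : ∀ N, ∀ m ≤ N, coeff (R := A) m f = coeff (R := A) m (P N) := by
    intro N
    induction N with
    | zero =>
      intro m hm
      interval_cases m
      simp only [hP, Finset.Icc_self, Finset.Icc_eq_empty_of_lt (by norm_num : (1:ℕ) > 0)]
      simpa [coeff_zero_eq_constantCoeff] using hf
    | succ N ih =>
      intro m hm
      rcases Nat.lt_or_ge m (N + 1) with h | h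
      · rw [hstep, coeff_mul_one_sub_of_lt _ _ h]
        exact ih m (by omega)
      · have hm' : m = N + 1 := by omega
        subst hm'
        rw [hstep, coeff_mul_one_sub_self, constantCoeff_prod]
        have hyd := seq_def f (N + 1)
        simp only [Nat.add_sub_cancel] at hyd
        rw [← hy] at hyd
        rw [hyd]
        simp only [hP]
        ring
  refine ⟨y, fun N _ m hm => hex N m hm, ?_⟩
  -- uniqueness
  intro y' hy' n
  induction n using Nat.strong_induction_on with
  | _ n ih =>
    intro hn1
    obtain ⟨M, rfl⟩ : ∃ M, n = M + 1 := ⟨n - 1, by omega⟩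
    set P' : ℕ → PowerSeries A :=
      fun N => ∏ k ∈ Finset.Icc 1 N, (1 - C (R := A) (y' k) * X ^ k) with hP'
    have hPeq : P' M = P M := by
      refine Finset.prod_congr rfl fun k hk => ?_
      rw [Finset.mem_Icc] at hk
      rw [ih k (by omega) (by omega)]
    have h1 : coeff (R := A) (M + 1) f = coeff (R := A) (M + 1) (P' (M + 1)) :=
      hy' (M + 1) hn1 (M + 1) le_rfl
    have h2 : P' (M + 1) = P' M * (1 - C (R := A) (y' (M + 1)) * X ^ (M + 1)) := by
      simp only [hP']
      rw [Finset.prod_Icc_succ_top (by omega)]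
    rw [h2, coeff_mul_one_sub_self, hPeq, constantCoeff_prod, one_mul] at h1
    have hyd := seq_def f (M + 1)
    simp only [Nat.add_sub_cancel] at hyd
    rw [← hy] at hyd
    have : y' (M + 1) = coeff (R := A) (M + 1) (P M) - coeff (R := A) (M + 1) f := by
      rw [h1]; ring
    rw [this, hyd]
end

section
/- Let A be a commutative ring, let N ≥ 1, and let x_1, …, x_N ∈ A. Set f = ∏_{n=1}^{N} (1 − x_n·t^n) ∈ A[[t]], and let g ∈ A[[t]] be the power series whose constant coefficient is 0 and whose m-th coefficient, for m ≥ 1, is Σ_{d ∣ m, 1 ≤ d ≤ N} d·x_d^{m/d}. Then −t·f′ = g·f in A[[t]], where f′ denotes the formal derivative of f with respect to t. -/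
open PowerSeries

private lemma prod_rule' {A : Type*} [CommRing A] (s : Finset ℕ) (f g : ℕ → A⟦X⟧)
    (h : ∀ n ∈ s, -(X * PowerSeries.derivative A (f n)) = g n * f n) :
    -(X * PowerSeries.derivative A (∏ n ∈ s, f n)) = (∑ n ∈ s, g n) * ∏ n ∈ s, f n := by
  induction s using Finset.induction_on with
  | empty => simp
  | @insert a s ha ih =>
    rw [Finset.prod_insert ha, Finset.sum_insert ha, Derivation.leibniz, smul_eq_mul, smul_eq_mul]
    have h1 := h a (Finset.mem_insert_self a s)
    have h2 := ih fun n hn => h n (Finset.mem_insert_of_mem hn)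
    have key : -(X * (f a * (PowerSeries.derivative A) (∏ n ∈ s, f n) +
        (∏ n ∈ s, f n) * (PowerSeries.derivative A) (f a))) =
        f a * -(X * (PowerSeries.derivative A) (∏ n ∈ s, f n)) +
        (∏ n ∈ s, f n) * -(X * (PowerSeries.derivative A) (f a)) := by ring
    rw [key, h1, h2]
    ring

private lemma geom_mul' {A : Type*} [CommRing A] (c : A) (n : ℕ) (hn : 1 ≤ n) :
    (PowerSeries.mk fun m => if n ∣ m ∧ m ≠ 0 then (n : A) * c ^ (m / n) else 0) *
      (1 - C c * X ^ n) = C ((n : A) * c) * X ^ n := by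
  set g : A⟦X⟧ := PowerSeries.mk fun m => if n ∣ m ∧ m ≠ 0 then (n : A) * c ^ (m / n) else 0
    with hgdef
  have hre : g * (C c * X ^ n) = (C c * g) * X ^ n := by ring
  ext m
  rw [mul_sub, mul_one, map_sub, hre, coeff_mul_X_pow', coeff_C_mul, coeff_C_mul, coeff_X_pow]
  simp only [g, coeff_mk]
  have hn0 : 0 < n := hn
  by_cases hd : n ∣ m
  · obtain ⟨k, rfl⟩ := hd
    rw [Nat.mul_div_cancel_left _ hn0]
    rcases Nat.eq_zero_or_pos k with rfl | hk
    · simp only [Nat.mul_zero, Nat.not_le.mpr hn0, if_neg, ite_false]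
      rw [if_neg (by simp), if_neg (by omega : ¬ (0:ℕ) = n)]
      simp
    rcases eq_or_ne k 1 with rfl | hk1
    · have h1 : n * 1 ≠ 0 := by omega
      have h2 : n ≤ n * 1 := by omega
      have h3 : n * 1 - n = 0 := by omega
      have h4 : n * 1 = n := by omega
      rw [if_pos ⟨⟨1, rfl⟩, h1⟩, if_pos h2, h3, if_neg (by simp), if_pos h4]
      ring
    · have hk2 : 2 ≤ k := by omega
      have h1 : n * k ≠ 0 := by positivity
      have h2 : n ≤ n * k := Nat.le_mul_of_pos_right n hk
      have h3 : n * k - n = n * (k - 1) := by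
        have : n * k = n * (k-1) + n := by
          rw [Nat.mul_sub_one]
          omega
        omega
      have h4 : n * k ≠ n := by
        have : n * 2 ≤ n * k := Nat.mul_le_mul_left n hk2
        omega
      have h6 : n * (k - 1) ≠ 0 := Nat.mul_ne_zero hn0.ne' (by omega)
      rw [if_pos ⟨⟨k, rfl⟩, h1⟩, if_pos h2, h3, if_pos ⟨⟨k-1, rfl⟩, h6⟩,
        Nat.mul_div_cancel_left _ hn0, if_neg h4]
      have hc : c ^ k = c * c ^ (k - 1) := by
        conv_lhs => rw [show k = (k - 1) + 1 by omega, pow_succ]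
        ring
      rw [hc]; ring
  · have hmn : m ≠ n := by rintro rfl; exact hd dvd_rfl
    rw [if_neg (by tauto : ¬ (n ∣ m ∧ m ≠ 0)), if_neg hmn]
    by_cases hle : n ≤ m
    · have hnd : ¬ (n ∣ (m - n) ∧ (m - n) ≠ 0) := by
        rintro ⟨h1, h2⟩
        exact hd (by rw [show m = (m - n) + n by omega]; exact dvd_add h1 dvd_rfl)
      rw [if_pos hle, if_neg hnd, mul_zero, sub_zero]
      ring
    · rw [if_neg hle, sub_zero]
      ring

private lemma single_factor' {A : Type*} [CommRing A] (c : A) (n : ℕ) (hn : 1 ≤ n) :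
    -(X * PowerSeries.derivative A (1 - C c * X ^ n)) =
      C ((n : A) * c) * X ^ n := by
  rw [map_sub, Derivation.leibniz, Derivation.leibniz_pow]
  simp only [map_one, derivative_C, derivative_X, smul_eq_mul, mul_one,
    Derivation.map_one_eq_zero, smul_zero, zero_add, mul_zero, add_zero, nsmul_eq_mul]
  have hxx : (X : A⟦X⟧) * X ^ (n - 1) = X ^ n := by
    rw [← pow_succ']; congr 1; omega
  rw [zero_sub, mul_neg, neg_neg,
    show (X : A⟦X⟧) * (C c * ((n : A⟦X⟧) * X ^ (n - 1))) =
      C c * (n : A⟦X⟧) * (X * X ^ (n - 1)) from by ring, hxx, map_mul, map_natCast]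
  ring

/-- Let `f = ∏_{n=1}^N (1 - x_n t^n)` and let `g` be the power series whose `m`-th
coefficient (for `m ≥ 1`) is the `m`-th big Witt polynomial
`w_m(x) = ∑_{d ∣ m, d ≤ N} d · x_d^{m/d}` (with `x` extended by zero beyond `N`), and whose
constant coefficient is `0`.  Then `-t · f' = g · f`, i.e. the operator
`D = -t (d/dt) log` sends `∏ (1 - x_n t^n)` to `∑_m w_m(x) t^m`. -/
theorem neg_t_mul_derivative_prod_one_sub {A : Type*} [CommRing A] (N : ℕ) (hN : 1 ≤ N)
    (x : ℕ → A) :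
    -(X * (PowerSeries.derivative A (∏ n ∈ Finset.Icc 1 N, (1 - C (x n) * X ^ n)))) =
      (PowerSeries.mk fun m =>
          if m = 0 then 0
          else ∑ d ∈ m.divisors.filter (· ≤ N), (d : A) * (x d) ^ (m / d)) *
        ∏ n ∈ Finset.Icc 1 N, (1 - C (x n) * X ^ n) := by
  have key := prod_rule' (Finset.Icc 1 N)
    (fun n => 1 - C (x n) * X ^ n)
    (fun n => PowerSeries.mk fun m => if n ∣ m ∧ m ≠ 0 then (n : A) * (x n) ^ (m / n) else 0)
    (fun n hn => by
      have h1 : 1 ≤ n := (Finset.mem_Icc.mp hn).1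
      rw [geom_mul' (x n) n h1, single_factor' (x n) n h1])
  rw [key]
  congr 1
  ext m
  rw [map_sum, coeff_mk]
  by_cases hm : m = 0
  · subst hm
    simp
  · rw [if_neg hm]
    simp only [coeff_mk, hm, ne_eq, not_false_eq_true, and_true]
    rw [← Finset.sum_filter]
    apply Finset.sum_congr _ (fun _ _ => rfl)
    ext d
    simp only [Finset.mem_filter, Finset.mem_Icc, Nat.mem_divisors]
    constructor
    · rintro ⟨⟨h1, h2⟩, h3⟩
      exact ⟨⟨h3, hm⟩, h2⟩
    · rintro ⟨⟨h1, _⟩, h2⟩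
      refine ⟨⟨Nat.pos_of_ne_zero ?_, h2⟩, h1⟩
      rintro rfl
      exact hm (zero_dvd_iff.mp h1)
end

section
/- Let p be a prime, R a commutative ring, a ∈ R, and x ∈ 𝕎 R. Then for every n, (teichmuller p a · x).coeff n = a^{p^n} · x.coeff n. -/
open WittVector

open Finset in
private theorem teich_mul_aux_inv {p : ℕ} [hp : Fact p.Prime] {S : Type*} [CommRing S]
    [Invertible (p : S)] (a : S) (x : WittVector p S) :
    WittVector.teichmuller p a * x = WittVector.mk p (fun n => a ^ p ^ n * x.coeff n) := by
  apply (WittVector.ghostMap.bijective_of_invertible p S).injective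
  funext n
  rw [WittVector.ghostMap_apply, WittVector.ghostMap_apply, map_mul]
  rw [show WittVector.ghostComponent n (WittVector.teichmuller p a) = a ^ p ^ n from
    WittVector.ghostComponent_teichmuller p a n]
  rw [WittVector.ghostComponent_apply, WittVector.ghostComponent_apply,
    aeval_wittPolynomial, aeval_wittPolynomial, Finset.mul_sum]
  refine Finset.sum_congr rfl fun i hi => ?_
  rw [WittVector.coeff_mk]
  have hin : i ≤ n := Nat.lt_succ_iff.mp (Finset.mem_range.mp hi)
  rw [mul_pow, ← pow_mul, ← pow_add, add_comm i (n - i), Nat.sub_add_cancel hin]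
  ring

private theorem teich_mul_aux_int {p : ℕ} [hp : Fact p.Prime]
    (a : MvPolynomial (Unit ⊕ ℕ) ℤ) (x : WittVector p (MvPolynomial (Unit ⊕ ℕ) ℤ)) :
    WittVector.teichmuller p a * x = WittVector.mk p (fun n => a ^ p ^ n * x.coeff n) := by
  let f : MvPolynomial (Unit ⊕ ℕ) ℤ →+* MvPolynomial (Unit ⊕ ℕ) ℚ :=
    MvPolynomial.map (Int.castRingHom ℚ)
  have hf : Function.Injective f :=
    MvPolynomial.map_injective _ Int.cast_injective
  letI : Invertible (p : MvPolynomial (Unit ⊕ ℕ) ℚ) :=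
    ⟨MvPolynomial.C ((p : ℚ)⁻¹), by
      rw [← map_natCast (MvPolynomial.C (σ := Unit ⊕ ℕ)) p, ← map_mul,
        inv_mul_cancel₀ (by exact_mod_cast hp.out.ne_zero), map_one], by
      rw [← map_natCast (MvPolynomial.C (σ := Unit ⊕ ℕ)) p, ← map_mul,
        mul_inv_cancel₀ (by exact_mod_cast hp.out.ne_zero), map_one]⟩
  apply WittVector.map_injective f hf
  rw [map_mul, WittVector.map_teichmuller, teich_mul_aux_inv]
  ext n
  simp [WittVector.map_coeff, WittVector.coeff_mk]

/-- Multiplication by a Teichmüller representative acts coordinatewise: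
`([a] · x)_n = a^{p^n} · x_n`. -/
theorem teichmuller_mul_coeff {p : ℕ} [hp : Fact p.Prime] {R : Type*} [CommRing R]
    (a : R) (x : WittVector p R) :
    ∀ n, (WittVector.teichmuller p a * x).coeff n = a ^ p ^ n * x.coeff n := by
  intro n
  let f : MvPolynomial (Unit ⊕ ℕ) ℤ →+* R :=
    (MvPolynomial.aeval (Sum.elim (fun _ => a) (fun n => x.coeff n))).toRingHom
  let A : MvPolynomial (Unit ⊕ ℕ) ℤ := MvPolynomial.X (Sum.inl ())
  let Y : WittVector p (MvPolynomial (Unit ⊕ ℕ) ℤ) :=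
    WittVector.mk p (fun n => MvPolynomial.X (Sum.inr n))
  have hA : f A = a := by simp [f, A]
  have hY : WittVector.map f Y = x := by
    ext m
    simp [Y, f, WittVector.map_coeff, WittVector.coeff_mk]
  calc (WittVector.teichmuller p a * x).coeff n
      = (WittVector.map f (WittVector.teichmuller p A * Y)).coeff n := by
        rw [map_mul, WittVector.map_teichmuller, hA, hY]
    _ = f ((WittVector.teichmuller p A * Y).coeff n) := WittVector.map_coeff f _ n
    _ = f (A ^ p ^ n * Y.coeff n) := by rw [teich_mul_aux_int, WittVector.coeff_mk]
    _ = a ^ p ^ n * x.coeff n := by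
        rw [map_mul, map_pow, hA, ← hY, WittVector.map_coeff]
end

section
/- Let p be a prime, R a commutative ring, x ∈ 𝕎 R, and let m ≥ 1 be an integer. Then (verschiebung x)^m = p^{m−1} · verschiebung (x^m) in 𝕎 R. -/
open WittVector

/-- For `m ≥ 1`, `(V x)^m = p^{m-1} · V (x^m)` in the ring of `p`-typical Witt vectors. -/
theorem verschiebung_pow {p : ℕ} [hp : Fact p.Prime] {R : Type*} [CommRing R]
    (x : WittVector p R) (m : ℕ) (hm : 1 ≤ m) :
    (WittVector.verschiebung x) ^ m =
      (p : WittVector p R) ^ (m - 1) * WittVector.verschiebung (x ^ m) := by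
  induction m, hm using Nat.le_induction with
  | base => simp
  | succ n hn ih =>
    have key : WittVector.verschiebung x * WittVector.verschiebung (x ^ n) =
        (p : WittVector p R) * WittVector.verschiebung (x ^ (n + 1)) := by
      rw [← WittVector.verschiebung_mul_frobenius, WittVector.frobenius_verschiebung]
      have : x * (x ^ n * (p : WittVector p R)) =
          (p : ℕ) • (x ^ (n + 1)) := by
        simp [pow_succ, nsmul_eq_mul]; ring
      rw [this, map_nsmul, nsmul_eq_mul]
    rw [pow_succ, ih, mul_assoc, mul_comm (WittVector.verschiebung (x ^ n)), key,
      ← mul_assoc, ← pow_succ]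
    have h : n - 1 + 1 = n + 1 - 1 := by omega
    rw [h]
end

section
/- Let p be a prime, R a commutative ring (of arbitrary characteristic), and x ∈ 𝕎 R. Then there exists y ∈ 𝕎 R such that frobenius x = x^p + p·y; that is, frobenius x ≡ x^p modulo p·𝕎 R, so frobenius is a lift of the p-power Frobenius on 𝕎 R / p·𝕎 R. -/
open WittVector

namespace FrobeniusCongrAux

open MvPolynomial Finset

variable (p : ℕ) [hp : Fact p.Prime]

/-- If `p^(k+1) ∣ a - b` then `p^(k+2) ∣ a^p - b^p`. -/
theorem pow_succ_dvd_pow_sub_pow {R : Type*} [CommRing R] (k : ℕ) {a b : R}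
    (h : (p : R) ^ (k + 1) ∣ a - b) : (p : R) ^ (k + 2) ∣ a ^ p - b ^ p := by
  have hab : (p : R) ∣ a - b := dvd_trans (dvd_pow_self (p : R) (Nat.succ_ne_zero k)) h
  rw [← geom_sum₂_mul, pow_succ']
  refine mul_dvd_mul ?_ h
  let f : R →+* R ⧸ Ideal.span {(p : R)} := Ideal.Quotient.mk (Ideal.span {(p : R)})
  have hf : ∀ r : R, (p : R) ∣ r ↔ f r = 0 := fun r => by
    rw [Ideal.Quotient.eq_zero_iff_mem, Ideal.mem_span_singleton]
  rw [hf, map_sub, sub_eq_zero] at hab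
  rw [hf, RingHom.map_geom_sum₂, hab, geom_sum₂_self, mul_eq_zero_of_left]
  rw [← map_natCast f, Ideal.Quotient.eq_zero_iff_mem, Ideal.mem_span_singleton]

/-- The rational polynomials whose ghost components are
`(W_{n+1} - W_n^p)/p`: they give the Witt vector `(frobenius x - x^p)/p`. -/
noncomputable def sRat (n : ℕ) : MvPolynomial ℕ ℚ :=
  bind₁ (fun k => C ((p : ℚ))⁻¹ * (wittPolynomial p ℚ (k + 1) - wittPolynomial p ℚ k ^ p))
    (xInTermsOfW p ℚ n)

theorem bind₁_sRat_wittPolynomial (n : ℕ) :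
    bind₁ (sRat p) (wittPolynomial p ℚ n) =
      C ((p : ℚ))⁻¹ * (wittPolynomial p ℚ (n + 1) - wittPolynomial p ℚ n ^ p) :=
  calc
    bind₁ (sRat p) (wittPolynomial p ℚ n) =
        bind₁ (fun k => C ((p : ℚ))⁻¹ * (wittPolynomial p ℚ (k + 1) - wittPolynomial p ℚ k ^ p))
          (bind₁ (xInTermsOfW p ℚ) (wittPolynomial p ℚ n)) := by
      rw [bind₁_bind₁]
      exact eval₂Hom_congr (RingHom.ext_rat _ _) rfl rfl
    _ = _ := by rw [bind₁_xInTermsOfW_wittPolynomial p _ n, bind₁_X_right]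

theorem sum_sRat (n : ℕ) :
    ∑ i ∈ range (n + 1), (p : MvPolynomial ℕ ℚ) ^ (i + 1) * sRat p i ^ p ^ (n - i) =
      wittPolynomial p ℚ (n + 1) - wittPolynomial p ℚ n ^ p := by
  have h := bind₁_sRat_wittPolynomial p n
  rw [← aeval_eq_bind₁, aeval_wittPolynomial] at h
  have hC : (p : MvPolynomial ℕ ℚ) * C ((p : ℚ))⁻¹ = 1 := by
    rw [← C_eq_coe_nat, ← C_mul, mul_inv_cancel₀ (by exact_mod_cast hp.out.ne_zero), C_1]
  calc
    ∑ i ∈ range (n + 1), (p : MvPolynomial ℕ ℚ) ^ (i + 1) * sRat p i ^ p ^ (n - i) =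
        (p : MvPolynomial ℕ ℚ) * ∑ i ∈ range (n + 1),
          (p : MvPolynomial ℕ ℚ) ^ i * sRat p i ^ p ^ (n - i) := by
      rw [mul_sum]
      exact sum_congr rfl fun i _ => by ring
    _ = _ := by rw [h, ← mul_assoc, hC, one_mul]

/-- Integral version of `sRat`. -/
noncomputable def sInt (n : ℕ) : MvPolynomial ℕ ℤ :=
  .ofCoeff (Finsupp.mapRange Rat.num (Rat.num_intCast 0) (AddMonoidAlgebra.coeff (sRat p n)))

theorem witt_succ_expand (k : ℕ) :
    wittPolynomial p ℤ (k + 1) =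
      expand p (wittPolynomial p ℤ k) + (p : MvPolynomial ℕ ℤ) ^ (k + 1) * X (k + 1) := by
  rw [wittPolynomial_eq_sum_C_mul_X_pow, wittPolynomial_eq_sum_C_mul_X_pow, sum_range_succ,
    tsub_self, pow_zero, pow_one]
  congr 1
  · rw [map_sum]
    refine sum_congr rfl fun i hi => ?_
    rw [mem_range, Nat.lt_succ_iff] at hi
    simp only [map_mul, map_pow, expand_X, algHom_C, ← pow_mul]
    congr 2
    rw [show k + 1 - i = (k - i) + 1 by omega, pow_succ']
  · rw [C_pow, C_eq_coe_nat]

theorem map_sInt (n : ℕ) :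
    MvPolynomial.map (Int.castRingHom ℚ) (sInt p n) = sRat p n := by
  induction n using Nat.strong_induction_on with | h n IH => ?_
  have hsumRat : ∀ m : ℕ,
      (∀ i, i ≤ m → MvPolynomial.map (Int.castRingHom ℚ) (sInt p i) = sRat p i) →
      MvPolynomial.map (Int.castRingHom ℚ)
          (∑ i ∈ range (m + 1), (p : MvPolynomial ℕ ℤ) ^ (i + 1) * sInt p i ^ p ^ (m - i)) =
        wittPolynomial p ℚ (m + 1) - wittPolynomial p ℚ m ^ p := by
    intro m hIH
    rw [map_sum, ← sum_sRat p m]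
    refine sum_congr rfl fun i hi => ?_
    rw [mem_range, Nat.lt_succ_iff] at hi
    rw [map_mul, map_pow, map_pow, map_natCast, hIH i hi]
  have hsum : ∀ m : ℕ, m < n →
      ∑ i ∈ range (m + 1), (p : MvPolynomial ℕ ℤ) ^ (i + 1) * sInt p i ^ p ^ (m - i) =
        wittPolynomial p ℤ (m + 1) - wittPolynomial p ℤ m ^ p := by
    intro m hm
    apply MvPolynomial.map_injective (Int.castRingHom ℚ) Int.cast_injective
    rw [map_sub, map_pow, map_wittPolynomial, map_wittPolynomial]
    exact hsumRat m fun i hi => IH i (lt_of_le_of_lt hi hm)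
  have hdvd : (p : MvPolynomial ℕ ℤ) ^ (n + 1) ∣
      wittPolynomial p ℤ (n + 1) - wittPolynomial p ℤ n ^ p -
        ∑ i ∈ range n, (p : MvPolynomial ℕ ℤ) ^ (i + 1) * sInt p i ^ p ^ (n - i) := by
    rcases n with _ | m
    · simp only [range_zero, sum_empty, sub_zero, zero_add, wittPolynomial_one,
        wittPolynomial_zero, pow_one, add_sub_cancel_right, C_eq_coe_nat]
      exact dvd_mul_right _ _
    · have hm := hsum m (Nat.lt_succ_self m)
      have hdag := congrArg (MvPolynomial.expand p) hm
      rw [map_sub, map_pow, map_sum] at hdag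
      simp only [map_mul, map_pow, map_natCast] at hdag
      have key :
          wittPolynomial p ℤ (m + 1 + 1) - wittPolynomial p ℤ (m + 1) ^ p -
              ∑ i ∈ range (m + 1),
                (p : MvPolynomial ℕ ℤ) ^ (i + 1) * sInt p i ^ p ^ (m + 1 - i) =
            (p : MvPolynomial ℕ ℤ) ^ (m + 2) * X (m + 2) +
              (expand p (wittPolynomial p ℤ m) ^ p - wittPolynomial p ℤ (m + 1) ^ p) +
              ∑ i ∈ range (m + 1), (p : MvPolynomial ℕ ℤ) ^ (i + 1) *
                (expand p (sInt p i) ^ p ^ (m - i) - sInt p i ^ p ^ (m + 1 - i)) := by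
        rw [witt_succ_expand p (m + 1)]
        simp only [mul_sub, sum_sub_distrib]
        rw [hdag]
        ring
      rw [key]
      refine dvd_add (dvd_add (Dvd.intro _ rfl) ?_) (dvd_sum fun i hi => ?_)
      · have h1 : (p : MvPolynomial ℕ ℤ) ^ (m + 1) ∣
            expand p (wittPolynomial p ℤ m) - wittPolynomial p ℤ (m + 1) := by
          rw [witt_succ_expand p m, show expand p (wittPolynomial p ℤ m) -
              (expand p (wittPolynomial p ℤ m) +
                (p : MvPolynomial ℕ ℤ) ^ (m + 1) * X (m + 1)) =
              (p : MvPolynomial ℕ ℤ) ^ (m + 1) * (-X (m + 1)) by ring]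
          exact dvd_mul_right _ _
        exact pow_succ_dvd_pow_sub_pow p m h1
      · rw [mem_range, Nat.lt_succ_iff] at hi
        have h2 : (p : MvPolynomial ℕ ℤ) ∣ expand p (sInt p i) - sInt p i ^ p := by
          rw [show (p : MvPolynomial ℕ ℤ) = C ((p : ℕ) : ℤ) from (C_eq_coe_nat p).symm,
            C_dvd_iff_zmod, map_sub, sub_eq_zero, map_expand, map_pow,
            MvPolynomial.expand_zmod]
        have h3 := dvd_sub_pow_of_dvd_sub h2 (m - i)
        rw [← pow_mul] at h3
        have hexp : p * p ^ (m - i) = p ^ (m + 1 - i) := by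
          rw [show m + 1 - i = (m - i) + 1 by omega, pow_succ']
        rw [hexp] at h3
        rw [show m + 2 = (i + 1) + (m - i + 1) by omega, pow_add]
        exact mul_dvd_mul dvd_rfl h3
  -- now finish the induction step
  have hrat : sRat p n =
      C (((p : ℚ) ^ (n + 1))⁻¹) * MvPolynomial.map (Int.castRingHom ℚ)
        (wittPolynomial p ℤ (n + 1) - wittPolynomial p ℤ n ^ p -
          ∑ i ∈ range n, (p : MvPolynomial ℕ ℤ) ^ (i + 1) * sInt p i ^ p ^ (n - i)) := by
    have h := sum_sRat p n
    rw [sum_range_succ, tsub_self, pow_zero, pow_one] at h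
    have hmap : MvPolynomial.map (Int.castRingHom ℚ)
        (∑ i ∈ range n, (p : MvPolynomial ℕ ℤ) ^ (i + 1) * sInt p i ^ p ^ (n - i)) =
        ∑ i ∈ range n, (p : MvPolynomial ℕ ℚ) ^ (i + 1) * sRat p i ^ p ^ (n - i) := by
      rw [map_sum]
      refine sum_congr rfl fun i hi => ?_
      rw [mem_range] at hi
      rw [map_mul, map_pow, map_pow, map_natCast, IH i hi]
    rw [map_sub, map_sub, map_pow, map_wittPolynomial, map_wittPolynomial, hmap]
    have hCp : (C ((p : ℚ) ^ (n + 1)) : MvPolynomial ℕ ℚ) = (p : MvPolynomial ℕ ℚ) ^ (n + 1) := by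
      rw [C_pow, C_eq_coe_nat]
    have hC : (C (((p : ℚ) ^ (n + 1))⁻¹) : MvPolynomial ℕ ℚ) *
        (p : MvPolynomial ℕ ℚ) ^ (n + 1) = 1 := by
      rw [← hCp, ← C_mul,
        inv_mul_cancel₀ (pow_ne_zero _ (by exact_mod_cast hp.out.ne_zero)), C_1]
    calc
      sRat p n = C (((p : ℚ) ^ (n + 1))⁻¹) * ((p : MvPolynomial ℕ ℚ) ^ (n + 1) * sRat p n) := by
        rw [← mul_assoc, hC, one_mul]
      _ = _ := by
        rw [show (p : MvPolynomial ℕ ℚ) ^ (n + 1) * sRat p n =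
          wittPolynomial p ℚ (n + 1) - wittPolynomial p ℚ n ^ p -
            ∑ i ∈ range n, (p : MvPolynomial ℕ ℚ) ^ (i + 1) * sRat p i ^ p ^ (n - i) by
            rw [eq_sub_iff_add_eq, add_comm, ← h]]
  rw [sInt, MvPolynomial.map_mapRange_eq_iff, Int.coe_castRingHom]
  intro c
  rw [hrat, coeff_C_mul, MvPolynomial.coeff_map]
  set D := wittPolynomial p ℤ (n + 1) - wittPolynomial p ℤ n ^ p -
      ∑ i ∈ range n, (p : MvPolynomial ℕ ℤ) ^ (i + 1) * sInt p i ^ p ^ (n - i) with hD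
  have hd : ((p : ℤ) ^ (n + 1)) ∣ MvPolynomial.coeff c D := by
    have hdvd' : (C ((p : ℤ) ^ (n + 1)) : MvPolynomial ℕ ℤ) ∣ D := by
      rwa [C_pow, C_eq_coe_nat]
    exact (C_dvd_iff_dvd_coeff ((p : ℤ) ^ (n + 1)) D).mp hdvd' c
  have hcast : ((p : ℚ) ^ (n + 1))⁻¹ * (Int.castRingHom ℚ) (MvPolynomial.coeff c D) =
      ((MvPolynomial.coeff c D : ℤ) : ℚ) / (((p : ℤ) ^ (n + 1) : ℤ) : ℚ) := by
    rw [eq_intCast, div_eq_inv_mul]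
    push_cast
    ring
  rw [hcast]
  exact (Rat.den_eq_one_iff _).mp
    ((Rat.den_div_intCast_eq_one_iff _ _
      (by exact_mod_cast pow_ne_zero (n + 1) (by exact_mod_cast hp.out.ne_zero))).mpr hd)

theorem sInt_sum (m : ℕ) :
    ∑ i ∈ range (m + 1), (p : MvPolynomial ℕ ℤ) ^ (i + 1) * sInt p i ^ p ^ (m - i) =
      wittPolynomial p ℤ (m + 1) - wittPolynomial p ℤ m ^ p := by
  apply MvPolynomial.map_injective (Int.castRingHom ℚ) Int.cast_injective
  rw [map_sub, map_pow, map_wittPolynomial, map_wittPolynomial, map_sum, ← sum_sRat p m]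
  refine sum_congr rfl fun i hi => ?_
  rw [map_mul, map_pow, map_pow, map_natCast, map_sInt]

theorem universal :
    WittVector.frobenius (WittVector.mk p (X : ℕ → MvPolynomial ℕ ℤ)) =
      WittVector.mk p X ^ p + (p : WittVector p (MvPolynomial ℕ ℤ)) * WittVector.mk p (sInt p) := by
  have hinj : Function.Injective (WittVector.map (MvPolynomial.map (Int.castRingHom ℚ)) :
      WittVector p (MvPolynomial ℕ ℤ) → WittVector p (MvPolynomial ℕ ℚ)) :=
    WittVector.map_injective _ (MvPolynomial.map_injective _ Int.cast_injective)
  apply hinj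
  rw [WittVector.IsPoly.map (WittVector.frobenius_isPoly p), map_add, map_mul, map_pow,
    map_natCast]
  letI : NeZero p := ⟨hp.out.ne_zero⟩
  apply (WittVector.ghostMap.bijective_of_invertible p (MvPolynomial ℕ ℚ)).injective
  funext n
  rw [WittVector.ghostMap_apply, WittVector.ghostMap_apply]
  have hg : ∀ (z : WittVector p (MvPolynomial ℕ ℚ)) (k : ℕ),
      WittVector.ghostComponent k z =
        ∑ i ∈ range (k + 1), (p : MvPolynomial ℕ ℚ) ^ i * z.coeff i ^ p ^ (k - i) := by
    intro z k
    rw [WittVector.ghostComponent_apply, aeval_wittPolynomial]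
  have hXc : ∀ i : ℕ,
      (WittVector.map (MvPolynomial.map (Int.castRingHom ℚ)) (WittVector.mk p X)).coeff i =
        X i := by
    intro i
    rw [WittVector.map_coeff, WittVector.coeff_mk, map_X]
  have hYc : ∀ i : ℕ,
      (WittVector.map (MvPolynomial.map (Int.castRingHom ℚ)) (WittVector.mk p (sInt p))).coeff i =
        MvPolynomial.map (Int.castRingHom ℚ) (sInt p i) := by
    intro i
    rw [WittVector.map_coeff, WittVector.coeff_mk]
  have hW : ∀ k : ℕ, wittPolynomial p ℚ k =
      ∑ i ∈ range (k + 1), (p : MvPolynomial ℕ ℚ) ^ i * X i ^ p ^ (k - i) := by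
    intro k
    conv_lhs => rw [← aeval_X_left_apply (wittPolynomial p ℚ k)]
    rw [aeval_wittPolynomial]
  rw [WittVector.ghostComponent_frobenius, map_add, map_mul, map_natCast, map_pow, hg, hg, hg]
  simp only [hXc, hYc]
  rw [← hW (n + 1), ← hW n]
  have hs := congrArg (MvPolynomial.map (Int.castRingHom ℚ)) (sInt_sum p n)
  rw [map_sub, map_pow, map_wittPolynomial, map_wittPolynomial, map_sum] at hs
  simp only [map_mul, map_pow, map_natCast] at hs
  have hmul : (p : MvPolynomial ℕ ℚ) *
      ∑ i ∈ range (n + 1), (p : MvPolynomial ℕ ℚ) ^ i *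
        MvPolynomial.map (Int.castRingHom ℚ) (sInt p i) ^ p ^ (n - i) =
      ∑ i ∈ range (n + 1), (p : MvPolynomial ℕ ℚ) ^ (i + 1) *
        MvPolynomial.map (Int.castRingHom ℚ) (sInt p i) ^ p ^ (n - i) := by
    rw [mul_sum]
    exact sum_congr rfl fun i _ => by ring
  rw [hmul, hs]
  ring

theorem map_frobenius {R : Type*} {S : Type*} [CommRing R] [CommRing S] (g : R →+* S)
    (x : WittVector p R) :
    WittVector.map g (WittVector.frobenius x) = WittVector.frobenius (WittVector.map g x) := by
  ext n
  simp only [WittVector.map_coeff, WittVector.coeff_frobenius, map_aeval]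
  apply eval₂Hom_congr (RingHom.ext_int _ _) _ rfl
  ext
  simp only [WittVector.map_coeff]

theorem map_universal {R : Type*} [CommRing R] (g : MvPolynomial ℕ ℤ →+* R) :
    WittVector.frobenius (WittVector.map g (WittVector.mk p X)) =
      WittVector.map g (WittVector.mk p X) ^ p +
        p * WittVector.map g (WittVector.mk p (sInt p)) := by
  rw [← map_frobenius p g, universal p, map_add, map_mul, map_pow, map_natCast]

end FrobeniusCongrAux

/-- `frobenius x ≡ x^p mod p · 𝕎 R` for `R` of arbitrary characteristic: the Frobenius on
Witt vectors lifts the `p`-power Frobenius on `𝕎 R / p 𝕎 R`. -/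
theorem frobenius_congr_pow_p {p : ℕ} [hp : Fact p.Prime] {R : Type*} [CommRing R]
    (x : WittVector p R) :
    ∃ y : WittVector p R, WittVector.frobenius x = x ^ p + p * y := by
  refine ⟨WittVector.map (MvPolynomial.eval₂Hom (Int.castRingHom R) x.coeff)
    (WittVector.mk p (FrobeniusCongrAux.sInt p)), ?_⟩
  have hx : WittVector.map (MvPolynomial.eval₂Hom (Int.castRingHom R) x.coeff)
      (WittVector.mk p MvPolynomial.X) = x := by
    ext n
    rw [WittVector.map_coeff, WittVector.coeff_mk]
    exact MvPolynomial.eval₂Hom_X' _ _ _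
  have h := FrobeniusCongrAux.map_universal p
    (MvPolynomial.eval₂Hom (Int.castRingHom R) x.coeff)
  rwa [hx] at h
end

section
/- Let p be a prime and let K be a perfect ring of characteristic p (i.e., a ↦ a^p is bijective on K). Then for every n ≥ 0, an element x ∈ 𝕎 K lies in the ideal generated by p^n if and only if x.coeff i = 0 for all i < n. Consequently, the p-adic topology on 𝕎 K coincides with the product topology, and 𝕎 K is complete and Hausdorff for the p-adic topology (IsAdicComplete (Ideal.span {p}) (𝕎 K)). -/
open WittVector

section Aux

variable {p : ℕ} [hp : Fact p.Prime] {K : Type*} [CommRing K] [CharP K p]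

/-- Iterated Verschiebung-Frobenius is multiplication by `p ^ n`. -/
lemma aux_iterate_vf (n : ℕ) (c : WittVector p K) :
    verschiebung^[n] (frobenius^[n] c) = c * (p : WittVector p K) ^ n := by
  have h := congr_fun (WittVector.verschiebung_frobenius_comm.comp_iterate n) c
  simp only [Function.comp_apply] at h
  have h2 : (verschiebung ∘ frobenius : WittVector p K → WittVector p K) =
      fun x => x * (p : WittVector p K) := by
    funext x
    simp [WittVector.verschiebung_frobenius]
  rw [← h, h2]
  clear h h2
  induction n with
  | zero => simp
  | succ n ih =>
    rw [Function.iterate_succ_apply', ih, pow_succ, mul_assoc]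

lemma aux_iterate_v_coeff (n : ℕ) (x : WittVector p K) (i : ℕ) (hi : i < n) :
    (verschiebung^[n] x).coeff i = 0 := by
  induction n generalizing i with
  | zero => omega
  | succ n ih =>
    rw [Function.iterate_succ_apply']
    cases i with
    | zero => rw [WittVector.verschiebung_coeff_zero]
    | succ i => rw [WittVector.verschiebung_coeff_succ]; exact ih i (by omega)

/-- The key characterization of `span {p ^ n}`. -/
lemma aux_mem_span (hK : Function.Bijective fun a : K => a ^ p) (n : ℕ) (x : WittVector p K) :
    x ∈ Ideal.span {(p : WittVector p K) ^ n} ↔ ∀ i < n, x.coeff i = 0 := by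
  haveI : PerfectRing K p := ⟨by simpa [frobenius_def] using hK⟩
  rw [Ideal.mem_span_singleton]
  constructor
  · rintro ⟨c, rfl⟩
    intro i hi
    rw [mul_comm, ← aux_iterate_vf]
    exact aux_iterate_v_coeff n _ i hi
  · intro h
    obtain ⟨c, hc⟩ := (WittVector.frobenius_bijective p K).surjective.iterate n (x.shift n)
    refine ⟨c, ?_⟩
    rw [← mul_comm, ← aux_iterate_vf, hc, ← WittVector.eq_iterate_verschiebung h]

end Aux

/-- For a perfect ring `K` of characteristic `p`: a Witt vector lies in the ideal
generated by `p^n` if and only if its first `n` components vanish (so the `p`-adic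
topology on `𝕎 K` is the product topology), and `𝕎 K` is complete and Hausdorff for the
`p`-adic topology. -/
theorem wittVector_p_adic_complete {p : ℕ} [hp : Fact p.Prime] {K : Type*}
    [CommRing K] [CharP K p] (hK : Function.Bijective fun a : K => a ^ p) :
    (∀ (n : ℕ) (x : WittVector p K),
        x ∈ Ideal.span {(p : WittVector p K) ^ n} ↔ ∀ i < n, x.coeff i = 0) ∧
      IsAdicComplete (Ideal.span {(p : WittVector p K)}) (WittVector p K) := by
  have key : ∀ (n : ℕ) (x : WittVector p K),
      x ∈ (Ideal.span {(p : WittVector p K)}) ^ n ↔ ∀ i < n, x.coeff i = 0 := by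
    intro n x
    rw [Ideal.span_singleton_pow]
    exact aux_mem_span hK n x
  haveI h1 : IsHausdorff (Ideal.span {(p : WittVector p K)}) (WittVector p K) := by
    constructor
    intro x hx
    ext i
    have := hx (i + 1)
    rw [SModEq.zero, smul_eq_mul, Ideal.mul_top, key] at this
    simpa using this i (by omega)
  haveI h2 : IsPrecomplete (Ideal.span {(p : WittVector p K)}) (WittVector p K) := by
    constructor
    intro f hf
    refine ⟨@WittVector.mk' p K (fun i => (f (i + 1)).coeff i), fun n => ?_⟩
    rw [SModEq.sub_mem, smul_eq_mul, Ideal.mul_top, key,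
      ← WittVector.mem_ker_truncate, RingHom.mem_ker, map_sub, sub_eq_zero]
    ext j
    simp only [WittVector.coeff_truncate]
    have h := hf (show (j : ℕ) + 1 ≤ n by omega)
    rw [SModEq.sub_mem, smul_eq_mul, Ideal.mul_top, key] at h
    have h2 : (f ((j : ℕ) + 1) - f n) ∈
        RingHom.ker (WittVector.truncate (p := p) ((j : ℕ) + 1)) :=
      (WittVector.mem_ker_truncate _ _).2 h
    rw [RingHom.mem_ker, map_sub, sub_eq_zero] at h2
    have h3 := congr_arg (fun y => TruncatedWittVector.coeff (Fin.last (j : ℕ)) y) h2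
    simp only [WittVector.coeff_truncate, Fin.val_last] at h3
    simpa using h3.symm
  exact ⟨fun n x => by rw [← Ideal.span_singleton_pow]; exact key n x, ⟨⟩⟩
end

section
/- Let p be a prime and let R be a commutative ring in which p is not a zero divisor (p·x = 0 implies x = 0). Let σ : R →+* R be a ring endomorphism such that for every x ∈ R there exists r ∈ R with σ(x) = x^p + p·r (σ is a Frobenius lift). Then there exists a unique ring homomorphism φ : R →+* 𝕎 R such that for all n ≥ 0 and all x ∈ R, ghostComponent n (φ x) = σ^[n](x), where σ^[n] is the n-fold iterate of σ (σ^[0] = id). -/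
open WittVector

section CartierAux

variable (p : ℕ) {R : Type*} [CommRing R]

/-- The partial ghost equation for a candidate coefficient sequence. -/
def PghostEq (σ : R →+* R) (x : R) (a : ℕ → R) (n : ℕ) : Prop :=
  ∑ i ∈ Finset.range (n + 1), (p : R) ^ i * a i ^ p ^ (n - i) = (⇑σ)^[n] x

lemma pow_regular (hp_nzd : ∀ x : R, (p : R) * x = 0 → x = 0) :
    ∀ (n : ℕ) (x : R), (p : R) ^ n * x = 0 → x = 0 := by
  intro n
  induction n with
  | zero => intro x hx; simpa using hx
  | succ n ih =>
    intro x hx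
    have h : (p : R) * ((p : R) ^ n * x) = 0 := by
      rw [← mul_assoc, ← pow_succ']; exact hx
    exact ih x (hp_nzd _ h)

lemma ghost_sum {p : ℕ} [hp : Fact p.Prime] (z : WittVector p R) (n : ℕ) :
    ghostComponent n z = ∑ i ∈ Finset.range (n + 1), (p : R) ^ i * z.coeff i ^ p ^ (n - i) := by
  rw [ghostComponent_apply, aeval_wittPolynomial]

lemma ghost_injective {p : ℕ} [hp : Fact p.Prime]
    (hp_nzd : ∀ x : R, (p : R) * x = 0 → x = 0) (u v : WittVector p R)
    (h : ∀ n, ghostComponent n u = ghostComponent n v) : u = v := by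
  ext n
  induction n using Nat.strong_induction_on with
  | _ n ih =>
    have h' := h n
    rw [ghost_sum, ghost_sum, Finset.sum_range_succ, Finset.sum_range_succ] at h'
    have hs : ∑ i ∈ Finset.range n, (p : R) ^ i * u.coeff i ^ p ^ (n - i)
        = ∑ i ∈ Finset.range n, (p : R) ^ i * v.coeff i ^ p ^ (n - i) :=
      Finset.sum_congr rfl fun i hi => by rw [ih i (Finset.mem_range.mp hi)]
    rw [hs] at h'
    have h0 : (p : R) ^ n * (u.coeff n - v.coeff n) = 0 := by
      simp only [Nat.sub_self, pow_zero, pow_one] at h'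
      rw [mul_sub]
      exact sub_eq_zero.mpr (add_left_cancel h')
    exact sub_eq_zero.mp (pow_regular p hp_nzd n _ h0)

lemma PghostEq_unique (hp_nzd : ∀ x : R, (p : R) * x = 0 → x = 0)
    (σ : R →+* R) (x : R) (a b : ℕ → R) (n : ℕ)
    (ha : ∀ m ≤ n, PghostEq p σ x a m) (hb : ∀ m ≤ n, PghostEq p σ x b m) :
    ∀ m ≤ n, a m = b m := by
  intro m
  induction m using Nat.strong_induction_on with
  | _ m ih =>
    intro hm
    have h1 := ha m hm
    have h2 := hb m hm
    simp only [PghostEq] at h1 h2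
    have h' := h1.trans h2.symm
    rw [Finset.sum_range_succ, Finset.sum_range_succ] at h'
    have hs : ∑ i ∈ Finset.range m, (p : R) ^ i * a i ^ p ^ (m - i)
        = ∑ i ∈ Finset.range m, (p : R) ^ i * b i ^ p ^ (m - i) :=
      Finset.sum_congr rfl fun i hi => by
        rw [ih i (Finset.mem_range.mp hi) (le_trans (le_of_lt (Finset.mem_range.mp hi)) hm)]
    rw [hs] at h'
    have h0 : (p : R) ^ m * (a m - b m) = 0 := by
      simp only [Nat.sub_self, pow_zero, pow_one] at h'
      rw [mul_sub]
      exact sub_eq_zero.mpr (add_left_cancel h')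
    exact sub_eq_zero.mp (pow_regular p hp_nzd m _ h0)

lemma PghostEq_exists {p : ℕ} [hp : Fact p.Prime]
    (σ : R →+* R) (hσ : ∀ x : R, ∃ r : R, σ x = x ^ p + p * r) (x : R) :
    ∀ n : ℕ, ∃ a : ℕ → R, ∀ m ≤ n, PghostEq p σ x a m := by
  intro n
  induction n with
  | zero =>
    refine ⟨fun _ => x, ?_⟩
    intro m hm
    interval_cases m
    simp [PghostEq]
  | succ n ih =>
    obtain ⟨a, ha⟩ := ih
    have key : (p : R) ^ (n + 1) ∣
        (⇑σ)^[n + 1] x - ∑ i ∈ Finset.range (n + 1), (p : R) ^ i * a i ^ p ^ (n + 1 - i) := by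
      have h1 : (⇑σ)^[n + 1] x = σ ((⇑σ)^[n] x) := Function.iterate_succ_apply' σ n x
      have ha' := ha n le_rfl
      simp only [PghostEq] at ha'
      rw [h1, ← ha']
      rw [map_sum, ← Finset.sum_sub_distrib]
      apply Finset.dvd_sum
      intro i hi
      have hi' : i ≤ n := Nat.lt_succ_iff.mp (Finset.mem_range.mp hi)
      have hterm : σ ((p : R) ^ i * a i ^ p ^ (n - i)) = (p : R) ^ i * (σ (a i)) ^ p ^ (n - i) := by
        rw [map_mul, map_pow, map_pow, map_natCast]
      rw [hterm]
      have hdvd1 : (p : R) ∣ σ (a i) - (a i) ^ p := by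
        obtain ⟨r, hr⟩ := hσ (a i)
        exact ⟨r, by rw [hr]; ring⟩
      have hdvd2 : (p : R) ^ (n - i + 1) ∣ (σ (a i)) ^ p ^ (n - i) - ((a i) ^ p) ^ p ^ (n - i) :=
        dvd_sub_pow_of_dvd_sub hdvd1 (n - i)
      have hpowex : (a i) ^ p ^ (n + 1 - i) = ((a i) ^ p) ^ p ^ (n - i) := by
        have h3 : n + 1 - i = n - i + 1 := by omega
        rw [h3, pow_succ', pow_mul]
      rw [hpowex]
      have : (p : R) ^ i * ((σ (a i)) ^ p ^ (n - i) - ((a i) ^ p) ^ p ^ (n - i))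
          = (p : R) ^ i * (σ (a i)) ^ p ^ (n - i) - (p : R) ^ i * ((a i) ^ p) ^ p ^ (n - i) := by
        ring
      rw [← this]
      have hpp : (p : R) ^ (n + 1) = (p : R) ^ i * (p : R) ^ (n - i + 1) := by
        rw [← pow_add]; congr 1; omega
      rw [hpp]
      exact mul_dvd_mul_left _ hdvd2
    obtain ⟨c, hc⟩ := key
    refine ⟨Function.update a (n + 1) c, ?_⟩
    intro m hm
    rcases Nat.lt_succ_iff_lt_or_eq.mp (Nat.lt_succ_of_le hm) with h | h
    · have hm' : m ≤ n := Nat.lt_succ_iff.mp h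
      simp only [PghostEq]
      have : ∑ i ∈ Finset.range (m + 1), (p : R) ^ i * (Function.update a (n + 1) c) i ^ p ^ (m - i)
          = ∑ i ∈ Finset.range (m + 1), (p : R) ^ i * a i ^ p ^ (m - i) :=
        Finset.sum_congr rfl fun i hi => by
          have : i ≠ n + 1 := by
            have := Finset.mem_range.mp hi; omega
          rw [Function.update_of_ne this]
      rw [this]
      exact ha m hm'
    · subst h
      simp only [PghostEq]
      rw [Finset.sum_range_succ]
      have h2 : ∑ i ∈ Finset.range (n + 1),
            (p : R) ^ i * (Function.update a (n + 1) c) i ^ p ^ (n + 1 - i)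
          = ∑ i ∈ Finset.range (n + 1), (p : R) ^ i * a i ^ p ^ (n + 1 - i) :=
        Finset.sum_congr rfl fun i hi => by
          have : i ≠ n + 1 := by
            have := Finset.mem_range.mp hi; omega
          rw [Function.update_of_ne this]
      rw [h2, Function.update_self]
      simp only [Nat.sub_self, pow_zero, pow_one]
      linear_combination -hc

end CartierAux

/-- **Cartier's universal property of Witt vectors for rings with a Frobenius lift.**
Let `R` be a ring in which `p` is not a zero divisor, and let `σ : R →+* R` satisfy
`σ x ≡ x^p mod p R`.  Then there is a unique ring homomorphism `φ : R →+* 𝕎 R` with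
`ghostComponent n (φ x) = σ^[n] x` for all `n` and `x`. -/
theorem exists_unique_ringHom_of_frobenius_lift {p : ℕ} [hp : Fact p.Prime] {R : Type*}
    [CommRing R] (hp_nzd : ∀ x : R, (p : R) * x = 0 → x = 0)
    (σ : R →+* R) (hσ : ∀ x : R, ∃ r : R, σ x = x ^ p + p * r) :
    ∃! φ : R →+* WittVector p R,
      ∀ (n : ℕ) (x : R), WittVector.ghostComponent n (φ x) = (⇑σ)^[n] x := by
  -- For each `x`, there is a Witt vector whose ghost components are `σ^[n] x`.
  have wex : ∀ x : R, ∃ w : WittVector p R, ∀ n, ghostComponent n w = (⇑σ)^[n] x := by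
    intro x
    choose A hA using PghostEq_exists σ hσ x
    refine ⟨WittVector.mk p (fun n => A n n), ?_⟩
    intro n
    rw [ghost_sum]
    simp only [WittVector.coeff_mk]
    have hcongr : ∀ i ∈ Finset.range (n + 1),
        (p : R) ^ i * (A i i) ^ p ^ (n - i) = (p : R) ^ i * (A n i) ^ p ^ (n - i) := by
      intro i hi
      have hi' : i ≤ n := Nat.lt_succ_iff.mp (Finset.mem_range.mp hi)
      have hAi : A i i = A n i :=
        PghostEq_unique p hp_nzd σ x (A i) (A n) i (hA i)
          (fun m hm => hA n m (le_trans hm hi')) i le_rfl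
      rw [hAi]
    rw [Finset.sum_congr rfl hcongr]
    have := hA n n le_rfl
    simpa only [PghostEq] using this
  choose w hw using wex
  have ginj := ghost_injective (p := p) hp_nzd
  refine ⟨{ toFun := w
            map_one' := ginj _ _ fun n => by
              rw [hw 1 n, iterate_map_one, map_one]
            map_mul' := fun a b => ginj _ _ fun n => by
              rw [hw (a * b) n, map_mul, hw a n, hw b n, iterate_map_mul]
            map_zero' := ginj _ _ fun n => by
              rw [hw 0 n, iterate_map_zero, map_zero]
            map_add' := fun a b => ginj _ _ fun n => by
              rw [hw (a + b) n, map_add, hw a n, hw b n, iterate_map_add] },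
        fun n x => hw x n, ?_⟩
  intro ψ hψ
  refine RingHom.ext fun x => ginj _ _ fun n => (hψ n x).trans (hw x n).symm
end

section
/- Let p be a prime. Let h ∈ ℚ[[X]] be the power series whose m-th coefficient is 1 if m = p^k for some k ≥ 0 (so in particular its coefficient in degree 1 is 1) and 0 otherwise, and let E ∈ ℚ[[X]] be a power series with constant coefficient 1 satisfying X·E′ = h·E (such E exists, is unique, and equals the Artin–Hasse exponential exp(X + X^p/p + X^{p^2}/p^2 + ⋯)). Then every coefficient of E is p-integral: for every k, the denominator in lowest terms of the k-th coefficient of E is not divisible by p. -/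
open PowerSeries
open scoped Classical

set_option linter.unusedSectionVars false
set_option linter.unusedVariables false

open Finset Nat



section AH
variable {p : ℕ} [hp : Fact p.Prime]

lemma ah_ratNorm_le_one_iff (q : ℚ) : ‖(q : ℚ_[p])‖ ≤ 1 ↔ ¬ (p ∣ q.den) := by
  constructor
  · intro h hdvd
    rcases eq_or_ne q 0 with rfl | hq
    · simp at hdvd
      exact hp.out.one_lt.ne' hdvd
    rw [Padic.norm_le_one_iff_val_nonneg, Padic.valuation_ratCast,
      padicValRat] at h
    have hnum : padicValInt p q.num = 0 := by
      apply padicValNat.eq_zero_of_not_dvd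
      intro hd
      exact (Nat.Prime.not_coprime_iff_dvd.mpr ⟨p, hp.out, hd, hdvd⟩) q.reduced
    have hden : 1 ≤ padicValNat p q.den := by
      exact one_le_padicValNat_of_dvd q.den_ne_zero hdvd
    rw [hnum] at h
    omega
  · exact fun h => Padic.norm_rat_le_one h

lemma ah_padicValNat_factorial_lt {j : ℕ} (hj : j ≠ 0) : padicValNat p (j !) < j := by
  have leg := sub_one_mul_padicValNat_factorial (p := p) j
  have hsum : (p.digits j).sum ≠ 0 := by
    intro h0
    apply hj
    have hall : ∀ d ∈ p.digits j, d = 0 := List.sum_eq_zero_iff.mp h0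
    have hd := Nat.ofDigits_digits p j
    rw [← hd]
    generalize p.digits j = l at hall
    induction l with
    | nil => simp [Nat.ofDigits]
    | cons a l ih =>
      rw [Nat.ofDigits_cons, hall a (by simp), ih (fun d hd => hall d (List.mem_cons_of_mem _ hd))]
      simp
  have h1 : padicValNat p (j !) ≤ (p - 1) * padicValNat p (j !) :=
    Nat.le_mul_of_pos_left _ (by have := hp.out.two_le; omega)
  omega

lemma ah_norm_p_pow_div_factorial {j : ℕ} (hj : j ≠ 0) :
    ‖(((p : ℚ) ^ j / j ! : ℚ) : ℚ_[p])‖ ≤ (p : ℝ)⁻¹ := by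
  have hfac : ((j ! : ℚ) : ℚ_[p]) ≠ 0 := by
    exact_mod_cast Nat.cast_ne_zero.mpr (Nat.factorial_ne_zero j)
  have hp1 : (1 : ℝ) < p := by exact_mod_cast hp.out.one_lt
  have hval : ‖((j ! : ℚ) : ℚ_[p])‖ = (p : ℝ) ^ (-(padicValNat p (j !) : ℤ)) := by
    rw [show ((j ! : ℚ) : ℚ_[p]) = ((j ! : ℕ) : ℚ_[p]) by push_cast; ring,
      Padic.norm_eq_zpow_neg_valuation (by exact_mod_cast hfac), Padic.valuation_natCast]
  have hnum : ‖(((p:ℚ) ^ j : ℚ) : ℚ_[p])‖ = (p : ℝ) ^ (-(j:ℤ)) := by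
    rw [show (((p:ℚ) ^ j : ℚ) : ℚ_[p]) = ((p : ℚ_[p]) ^ j) by push_cast; ring]
    rw [norm_pow, Padic.norm_p, inv_pow, ← zpow_natCast, ← zpow_neg]
  have : (((p : ℚ) ^ j / j ! : ℚ) : ℚ_[p]) = (((p:ℚ)^j : ℚ) : ℚ_[p]) / ((j ! : ℚ) : ℚ_[p]) := by
    push_cast; ring
  rw [this, norm_div, hnum, hval, ← zpow_sub₀ (by positivity)]
  calc (p:ℝ) ^ (-(j:ℤ) - -(padicValNat p (j !) : ℤ)) ≤ (p:ℝ) ^ (-1 : ℤ) := by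
        apply zpow_le_zpow_right₀ hp1.le
        have := ah_padicValNat_factorial_lt (p := p) hj
        omega
    _ = (p : ℝ)⁻¹ := by simp

end AH


lemma ah_ode_uniq (g F G : PowerSeries ℚ) (hg : constantCoeff g = 0)
    (hF : X * PowerSeries.derivative ℚ F = g * F)
    (hG : X * PowerSeries.derivative ℚ G = g * G)
    (h0 : constantCoeff F = constantCoeff G) : F = G := by
  ext n
  induction n using Nat.strong_induction_on with
  | _ n ih =>
    match n with
    | 0 => simpa [coeff_zero_eq_constantCoeff] using h0
    | (n + 1) =>
      have hFn := congrArg (coeff (n + 1)) hF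
      have hGn := congrArg (coeff (n + 1)) hG
      rw [coeff_succ_X_mul, coeff_derivative, coeff_mul] at hFn hGn
      have hsum : ∑ x ∈ antidiagonal (n + 1), coeff x.1 g * coeff x.2 F =
          ∑ x ∈ antidiagonal (n + 1), coeff x.1 g * coeff x.2 G := by
        apply Finset.sum_congr rfl
        intro x hx
        rw [Finset.HasAntidiagonal.mem_antidiagonal] at hx
        rcases Nat.lt_or_ge x.2 (n + 1) with h | h
        · rw [ih x.2 h]
        · have hx2 : x.2 = n + 1 := le_antisymm (by omega) h
          have hx1 : x.1 = 0 := by omega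
          rw [hx1, coeff_zero_eq_constantCoeff, hg, zero_mul, zero_mul]
      have : coeff (n + 1) F * (n + 1 : ℚ) = coeff (n + 1) G * (n + 1 : ℚ) := by
        rw [hFn, hGn, hsum]
      have hne : ((n : ℚ) + 1) ≠ 0 := by positivity
      exact mul_right_cancel₀ hne this

lemma ah_add_pow_eq {A : Type*} [CommRing A] (a b : A) (m : ℕ) :
    ∃ c, (a + b) ^ m = a ^ m + m * a ^ (m - 1) * b + b ^ 2 * c := by
  induction m with
  | zero => exact ⟨0, by simp⟩
  | succ m ih =>
    obtain ⟨c, hc⟩ := ih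
    rcases Nat.eq_zero_or_pos m with rfl | hm
    · exact ⟨0, by ring⟩
    · refine ⟨(m : A) * a ^ (m - 1) + c * (a + b), ?_⟩
      have hpow : a ^ (m - 1) * a = a ^ m := by
        rw [← pow_succ]
        congr 1
        omega
      calc (a + b) ^ (m + 1) = (a ^ m + m * a ^ (m - 1) * b + b ^ 2 * c) * (a + b) := by
            rw [pow_succ, hc]
        _ = a ^ (m+1) + (m * (a ^ (m-1) * a)) * b + a ^ m * b
              + b ^ 2 * ((m : A) * a ^ (m - 1) + c * (a + b)) := by ring
        _ = _ := by rw [hpow]; push_cast; ring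

lemma ah_coeff_pow_trunc (q : ℕ) (E : PowerSeries ℚ) (hE0 : constantCoeff E = 1)
    {n : ℕ} (hn : 1 ≤ n) :
    coeff n (E ^ q) = coeff n ((trunc n E : PowerSeries ℚ) ^ q) + q * coeff n E := by
  set f : PowerSeries ℚ := (trunc n E : PowerSeries ℚ) with hf
  set r : PowerSeries ℚ := E - f with hr
  have hrc : ∀ m < n, coeff m r = 0 := by
    intro m hm
    simp [hr, hf, Polynomial.coeff_coe, coeff_trunc, hm]
  obtain ⟨u, hu⟩ : (X : PowerSeries ℚ) ^ n ∣ r := X_pow_dvd_iff.mpr hrc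
  have hEfr : E = f + r := by ring
  obtain ⟨c, hc⟩ := ah_add_pow_eq f r q
  have hconst : constantCoeff f = 1 := by
    have h1 : coeff 0 f = 1 := by
      rw [hf, Polynomial.coeff_coe, coeff_trunc, if_pos (show 0 < n by omega),
        coeff_zero_eq_constantCoeff, hE0]
    simpa [coeff_zero_eq_constantCoeff] using h1
  have hcoeff_r : coeff n r = coeff n E := by
    simp [hr, hf, Polynomial.coeff_coe, coeff_trunc]
  have h1 : coeff n (f ^ (q - 1) * r) = coeff n E := by
    rw [hu, show f ^ (q-1) * (X ^ n * u) = X ^ n * (f ^ (q-1) * u) by ring,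
      coeff_X_pow_mul', if_pos le_rfl, Nat.sub_self]
    have h0u : coeff n r = coeff 0 u := by
      rw [hu, coeff_X_pow_mul', if_pos le_rfl, Nat.sub_self]
    have hmain : coeff 0 (f ^ (q - 1) * u) = coeff 0 u := by
      rw [coeff_zero_eq_constantCoeff_apply, map_mul, map_pow, hconst, one_pow, one_mul,
        ← coeff_zero_eq_constantCoeff_apply]
    rw [hmain, ← h0u, hcoeff_r]
  have h2 : coeff n (r ^ 2 * c) = 0 := by
    rw [hu, show (X ^ n * u) ^ 2 * c = X ^ (2 * n) * (u ^ 2 * c) by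
      rw [mul_pow, ← pow_mul]; ring, coeff_X_pow_mul']
    have : ¬ (2 * n ≤ n) := by omega
    simp [this]
  rw [hEfr, hc, map_add, map_add, h2, add_zero,
    show (q : PowerSeries ℚ) * f ^ (q - 1) * r = C (q : ℚ) * (f ^ (q - 1) * r) by
      rw [map_natCast]; ring,
    coeff_C_mul, h1, ← hEfr]


noncomputable def ahh (p : ℕ) : PowerSeries ℚ :=
  PowerSeries.mk fun m : ℕ => if ∃ k : ℕ, m = p ^ k then (1 : ℚ) else 0

noncomputable def ahS (p : ℕ) (E : PowerSeries ℚ) : PowerSeries ℚ :=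
  PowerSeries.mk fun m : ℕ => if p ∣ m then coeff (m / p) E else 0

section AH3
variable {p : ℕ} [hp : Fact p.Prime]

lemma ah_constantCoeff_ahh : constantCoeff (ahh p) = 0 := by
  rw [← coeff_zero_eq_constantCoeff_apply, ahh, coeff_mk, if_neg]
  rintro ⟨k, hk⟩
  exact (pow_pos hp.out.pos k).ne' hk.symm

lemma ah_coeff_hX_eq_zero {i : ℕ} (h : ¬ p ∣ i) : coeff i (ahh p - X) = 0 := by
  rw [map_sub, ahh, coeff_mk, coeff_X]
  rcases eq_or_ne i 1 with rfl | hi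
  · rw [if_pos ⟨0, (pow_zero p).symm⟩, if_pos rfl, sub_self]
  · rw [if_neg, if_neg hi, sub_zero]
    rintro ⟨k, rfl⟩
    rcases Nat.eq_zero_or_pos k with rfl | hk
    · exact hi (pow_zero p)
    · exact h (dvd_pow_self p hk.ne')

lemma ah_coeff_hX_pmul (i : ℕ) : coeff (p * i) (ahh p - X) = coeff i (ahh p) := by
  have hp2 := hp.out.two_le
  rcases Nat.eq_zero_or_pos i with rfl | hi
  · rw [mul_zero, map_sub, coeff_X, if_neg (by omega), sub_zero]
  rw [map_sub, coeff_X, if_neg (by nlinarith), sub_zero, ahh, coeff_mk, coeff_mk]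
  apply if_congr _ rfl rfl
  constructor
  · rintro ⟨k, hk⟩
    rcases Nat.eq_zero_or_pos k with rfl | hk0
    · simp at hk; nlinarith
    · refine ⟨k - 1, Nat.eq_of_mul_eq_mul_left (show 0 < p by omega) ?_⟩
      rw [hk, ← pow_succ']
      congr 1
      omega
  · rintro ⟨k, rfl⟩
    exact ⟨k + 1, (pow_succ' p k).symm⟩

lemma ah_sum_antidiagonal_pmul (m : ℕ) (F : ℕ → ℕ → ℚ)
    (hF1 : ∀ i j, i + j = p * m → ¬ p ∣ i → F i j = 0)
    (hF2 : ∀ i j, i + j = p * m → ¬ p ∣ j → F i j = 0) :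
    ∑ x ∈ antidiagonal (p * m), F x.1 x.2 = ∑ x ∈ antidiagonal m, F (p * x.1) (p * x.2) := by
  have hp0 : p ≠ 0 := hp.out.pos.ne'
  rw [← Finset.sum_filter_of_ne (p := fun x : ℕ × ℕ => p ∣ x.1)
    (fun x hx hne => by
      by_contra hdvd
      exact hne (hF1 x.1 x.2 (Finset.HasAntidiagonal.mem_antidiagonal.mp hx) hdvd))]
  apply Finset.sum_nbij' (i := fun x : ℕ × ℕ => (x.1 / p, x.2 / p))
    (j := fun y : ℕ × ℕ => (p * y.1, p * y.2))
  · intro x hx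
    obtain ⟨hmem, hdvd1⟩ := Finset.mem_filter.mp hx
    have hsum := Finset.HasAntidiagonal.mem_antidiagonal.mp hmem
    have hdvd2 : p ∣ x.2 := (Nat.dvd_add_right hdvd1).mp (hsum ▸ ⟨m, rfl⟩)
    obtain ⟨c1, hc1⟩ := hdvd1
    obtain ⟨c2, hc2⟩ := hdvd2
    apply Finset.HasAntidiagonal.mem_antidiagonal.mpr
    simp only [hc1, hc2, Nat.mul_div_cancel_left _ hp.out.pos]
    have : p * c1 + p * c2 = p * m := by rw [← hc1, ← hc2]; exact hsum
    exact Nat.eq_of_mul_eq_mul_left hp.out.pos (by rw [Nat.mul_add]; exact this)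
  · intro y hy
    have hsum := Finset.HasAntidiagonal.mem_antidiagonal.mp hy
    refine Finset.mem_filter.mpr ⟨Finset.HasAntidiagonal.mem_antidiagonal.mpr ?_, ⟨y.1, rfl⟩⟩
    rw [← Nat.mul_add, hsum]
  · intro x hx
    obtain ⟨hmem, hdvd1⟩ := Finset.mem_filter.mp hx
    have hsum := Finset.HasAntidiagonal.mem_antidiagonal.mp hmem
    have hdvd2 : p ∣ x.2 := (Nat.dvd_add_right hdvd1).mp (hsum ▸ ⟨m, rfl⟩)
    ext <;> simp [Nat.mul_div_cancel' hdvd1, Nat.mul_div_cancel' hdvd2]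
  · intro y hy
    ext <;> simp [Nat.mul_div_cancel_left _ hp.out.pos]
  · intro x hx
    obtain ⟨hmem, hdvd1⟩ := Finset.mem_filter.mp hx
    have hsum := Finset.HasAntidiagonal.mem_antidiagonal.mp hmem
    have hdvd2 : p ∣ x.2 := (Nat.dvd_add_right hdvd1).mp (hsum ▸ ⟨m, rfl⟩)
    rw [Nat.mul_div_cancel' hdvd1, Nat.mul_div_cancel' hdvd2]

variable (E : PowerSeries ℚ)

lemma ah_S_ode (hE : X * PowerSeries.derivative ℚ E = ahh p * E) :
    X * PowerSeries.derivative ℚ (ahS p E) = ((p : PowerSeries ℚ) * (ahh p - X)) * ahS p E := by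
  have hp0 : 0 < p := hp.out.pos
  have hrw : ((p : PowerSeries ℚ) * (ahh p - X)) * ahS p E
      = C (p : ℚ) * ((ahh p - X) * ahS p E) := by
    rw [map_natCast]; ring
  ext n
  match n with
  | 0 =>
    rw [coeff_zero_eq_constantCoeff_apply, map_mul, constantCoeff_X, zero_mul, hrw,
      coeff_zero_eq_constantCoeff_apply, map_mul, map_mul, map_sub, constantCoeff_X,
      ah_constantCoeff_ahh, sub_zero, zero_mul, mul_zero]
  | (n + 1) =>
    rw [coeff_succ_X_mul, coeff_derivative, hrw, coeff_C_mul, coeff_mul]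
    by_cases hdvd : p ∣ (n + 1)
    · obtain ⟨m, hm⟩ := hdvd
      have hm1 : 1 ≤ m := by nlinarith
      have hLHS : coeff (n + 1) (ahS p E) = coeff m E := by
        rw [ahS, coeff_mk, if_pos ⟨m, hm⟩, hm, Nat.mul_div_cancel_left _ hp0]
      rw [hLHS]
      have hsum : ∑ x ∈ antidiagonal (n + 1),
          coeff x.1 (ahh p - X) * coeff x.2 (ahS p E)
          = ∑ x ∈ antidiagonal m, coeff x.1 (ahh p) * coeff x.2 E := by
        rw [hm, ah_sum_antidiagonal_pmul m
          (fun i j => coeff i (ahh p - X) * coeff j (ahS p E))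
          (fun i j _ hi => by simp [ah_coeff_hX_eq_zero hi])
          (fun i j _ hj => by simp [ahS, coeff_mk, hj])]
        apply Finset.sum_congr rfl
        intro x _
        rw [ah_coeff_hX_pmul, ahS, coeff_mk, if_pos ⟨x.2, rfl⟩,
          Nat.mul_div_cancel_left _ hp0]
      rw [hsum]
      have hEm : ∑ x ∈ antidiagonal m, coeff x.1 (ahh p) * coeff x.2 E
          = coeff m E * (m : ℚ) := by
        obtain ⟨m', rfl⟩ : ∃ m', m = m' + 1 := ⟨m - 1, by omega⟩
        rw [← coeff_mul, ← hE, coeff_succ_X_mul, coeff_derivative]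
        push_cast; ring
      rw [hEm]
      have : ((n : ℚ) + 1) = (p : ℚ) * m := by exact_mod_cast congrArg (Nat.cast : ℕ → ℚ) hm
      rw [this]; ring
    · have hLHS : coeff (n + 1) (ahS p E) = 0 := by
        rw [ahS, coeff_mk, if_neg hdvd]
      rw [hLHS, zero_mul]
      rw [Finset.sum_eq_zero, mul_zero]
      intro x hx
      have hsum := Finset.HasAntidiagonal.mem_antidiagonal.mp hx
      by_cases hj : p ∣ x.2
      · have hi : ¬ p ∣ x.1 := by
          intro hi
          exact hdvd (hsum ▸ Nat.dvd_add hi hj)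
        rw [ah_coeff_hX_eq_zero hi, zero_mul]
      · rw [show coeff x.2 (ahS p E) = 0 by rw [ahS, coeff_mk, if_neg hj], mul_zero]

lemma ah_T_ode : X * PowerSeries.derivative ℚ (rescale (p : ℚ) (exp ℚ))
    = ((p : PowerSeries ℚ) * X) * rescale (p : ℚ) (exp ℚ) := by
  have hrw : ((p : PowerSeries ℚ) * X) * rescale (p : ℚ) (exp ℚ)
      = C (p : ℚ) * (X * rescale (p : ℚ) (exp ℚ)) := by
    rw [map_natCast]; ring
  ext n
  match n with
  | 0 =>
    simp [coeff_zero_eq_constantCoeff_apply, map_mul, constantCoeff_X]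
  | (n + 1) =>
    rw [coeff_succ_X_mul, coeff_derivative, hrw, coeff_C_mul, coeff_succ_X_mul,
      coeff_rescale, coeff_rescale, coeff_exp, coeff_exp]
    have h1 : (n + 1)! = (n + 1) * n ! := Nat.factorial_succ n
    have h2 : ((n)! : ℚ) ≠ 0 := by exact_mod_cast Nat.factorial_ne_zero n
    simp only [Algebra.algebraMap_self, RingHom.id_apply, h1]
    push_cast
    field_simp
    ring

lemma ah_Epow_ode (hE : X * PowerSeries.derivative ℚ E = ahh p * E) :
    X * PowerSeries.derivative ℚ (E ^ p) = ((p : PowerSeries ℚ) * ahh p) * (E ^ p) := by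
  have hleib := Derivation.leibniz_pow (PowerSeries.derivative ℚ) E p
  have h1p : 0 < p := hp.out.pos
  have hpow : E ^ (p - 1) * E = E ^ p := by
    rw [← pow_succ]; congr 1; omega
  rw [hleib, smul_eq_mul, ← Nat.cast_smul_eq_nsmul (PowerSeries ℚ), smul_eq_mul]
  calc X * ((p : PowerSeries ℚ) * (E ^ (p - 1) * PowerSeries.derivative ℚ E))
      = (p : PowerSeries ℚ) * (E ^ (p - 1) * (X * PowerSeries.derivative ℚ E)) := by ring
    _ = (p : PowerSeries ℚ) * (E ^ (p - 1) * (ahh p * E)) := by rw [hE]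
    _ = (p : PowerSeries ℚ) * (ahh p * (E ^ (p - 1) * E)) := by ring
    _ = ((p : PowerSeries ℚ) * ahh p) * (E ^ p) := by rw [hpow]; ring

end AH3


section AH4
variable {p : ℕ} [hp : Fact p.Prime]

lemma ah_FE (E : PowerSeries ℚ) (hE0 : constantCoeff E = 1)
    (hE : X * PowerSeries.derivative ℚ E = ahh p * E) :
    E ^ p = ahS p E * rescale (p : ℚ) (exp ℚ) := by
  apply ah_ode_uniq ((p : PowerSeries ℚ) * ahh p)
  · rw [map_mul, ah_constantCoeff_ahh, mul_zero]
  · exact ah_Epow_ode E hE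
  · have hS := ah_S_ode E hE
    have hT := ah_T_ode (p := p)
    rw [Derivation.leibniz, smul_eq_mul, smul_eq_mul]
    calc X * (ahS p E * PowerSeries.derivative ℚ (rescale (p:ℚ) (exp ℚ))
            + rescale (p:ℚ) (exp ℚ) * PowerSeries.derivative ℚ (ahS p E))
        = ahS p E * (X * PowerSeries.derivative ℚ (rescale (p:ℚ) (exp ℚ)))
          + rescale (p:ℚ) (exp ℚ) * (X * PowerSeries.derivative ℚ (ahS p E)) := by ring
      _ = ahS p E * (((p : PowerSeries ℚ) * X) * rescale (p:ℚ) (exp ℚ))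
          + rescale (p:ℚ) (exp ℚ) * (((p : PowerSeries ℚ) * (ahh p - X)) * ahS p E) := by
            rw [hS, hT]
      _ = ((p : PowerSeries ℚ) * ahh p) * (ahS p E * rescale (p:ℚ) (exp ℚ)) := by ring
  · rw [map_pow, hE0, one_pow, map_mul]
    have h1 : constantCoeff (ahS p E) = 1 := by
      rw [← coeff_zero_eq_constantCoeff_apply, ahS, coeff_mk, if_pos (dvd_zero p),
        Nat.zero_div, coeff_zero_eq_constantCoeff_apply, hE0]
    have h2 : constantCoeff (rescale (p:ℚ) (exp ℚ)) = 1 := by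
      rw [← coeff_zero_eq_constantCoeff_apply, coeff_rescale, coeff_exp]
      simp
    rw [h1, h2, mul_one]

lemma ah_frob (F : Polynomial ℤ_[p]) (n : ℕ) :
    ‖(F ^ p).coeff n - ((Polynomial.expand ℤ_[p] p F)).coeff n‖ ≤ (p : ℝ)⁻¹ := by
  have hmapeq : (F ^ p).map PadicInt.toZMod
      = (Polynomial.expand ℤ_[p] p F).map PadicInt.toZMod := by
    rw [Polynomial.map_pow, Polynomial.map_expand]
    have hfro := Polynomial.map_frobenius_expand p (F.map (PadicInt.toZMod (p := p)))
    have hid : Polynomial.map (frobenius (ZMod p) p)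
        (Polynomial.expand (ZMod p) p (F.map PadicInt.toZMod))
        = Polynomial.expand (ZMod p) p (F.map PadicInt.toZMod) := by
      ext m
      rw [Polynomial.coeff_map, frobenius_def]
      exact ZMod.pow_card _
    rw [← hfro, hid]
  have hco : PadicInt.toZMod ((F ^ p).coeff n - (Polynomial.expand ℤ_[p] p F).coeff n) = 0 := by
    rw [map_sub, sub_eq_zero, ← Polynomial.coeff_map, ← Polynomial.coeff_map, hmapeq]
  have hker : ((F ^ p).coeff n - (Polynomial.expand ℤ_[p] p F).coeff n)
      ∈ RingHom.ker (PadicInt.toZMod (p := p)) := hco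
  rw [PadicInt.ker_toZMod, PadicInt.maximalIdeal_eq_span_p] at hker
  have hnorm := (PadicInt.norm_le_pow_iff_mem_span_pow
    ((F ^ p).coeff n - (Polynomial.expand ℤ_[p] p F).coeff n) 1).mpr (by rwa [pow_one])
  calc ‖(F ^ p).coeff n - (Polynomial.expand ℤ_[p] p F).coeff n‖
      ≤ (p:ℝ) ^ (-(1:ℕ) : ℤ) := hnorm
    _ = (p:ℝ)⁻¹ := by norm_num

theorem ah_main (E : PowerSeries ℚ) (hE0 : constantCoeff E = 1)
    (hE : X * PowerSeries.derivative ℚ E = ahh p * E) :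
    ∀ k : ℕ, ‖((coeff k E : ℚ) : ℚ_[p])‖ ≤ 1 := by
  intro k
  induction k using Nat.strong_induction_on with
  | _ n IH =>
    rcases Nat.eq_zero_or_pos n with rfl | hn
    · rw [coeff_zero_eq_constantCoeff_apply, hE0]; simp
    have hp0 : 0 < p := hp.out.pos
    have hp1R : (0:ℝ) < (p:ℝ)⁻¹ := by positivity
    set b : ℕ → ℤ_[p] :=
      fun m => if h : m < n then ⟨((coeff m E : ℚ) : ℚ_[p]), IH m h⟩ else 0 with hbdef
    set F : Polynomial ℤ_[p] := ∑ m ∈ Finset.range n, Polynomial.monomial m (b m) with hFdef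
    have hFcoeff : ∀ m, F.coeff m = if m < n then b m else 0 := by
      intro m
      rw [hFdef, Polynomial.finset_sum_coeff]
      simp only [Polynomial.coeff_monomial]
      rw [Finset.sum_ite_eq' (Finset.range n) m b]
      simp [Finset.mem_range]
    -- key1 : the truncation power coefficient matches F over ℚ_[p]
    have key1 : ((coeff n ((trunc n E : PowerSeries ℚ) ^ p) : ℚ) : ℚ_[p])
        = (((F ^ p).coeff n : ℤ_[p]) : ℚ_[p]) := by
      rw [← Polynomial.coe_pow, Polynomial.coeff_coe]
      have hmap : (trunc n E ^ p).map (Rat.castHom ℚ_[p])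
          = (F ^ p).map PadicInt.Coe.ringHom := by
        rw [Polynomial.map_pow, Polynomial.map_pow]
        congr 1
        ext m
        rw [Polynomial.coeff_map, Polynomial.coeff_map, coeff_trunc, hFcoeff]
        split_ifs with h
        · rw [hbdef]
          simp only [dif_pos h]
          simp only [h, ↓reduceDIte]
          rfl
        · simp
      have h1 : (((trunc n E ^ p).coeff n : ℚ) : ℚ_[p])
          = ((trunc n E ^ p).map (Rat.castHom ℚ_[p])).coeff n := by
        rw [Polynomial.coeff_map]; rfl
      have h2 : (((F ^ p).coeff n : ℤ_[p]) : ℚ_[p])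
          = ((F ^ p).map PadicInt.Coe.ringHom).coeff n := by
        rw [Polynomial.coeff_map]; rfl
      rw [h1, h2, hmap]
    -- key2 : Frobenius congruence bound over ℚ_[p]
    have key2 : ‖(((F ^ p).coeff n : ℤ_[p]) : ℚ_[p])
        - (((Polynomial.expand ℤ_[p] p F).coeff n : ℤ_[p]) : ℚ_[p])‖ ≤ (p:ℝ)⁻¹ := by
      have := ah_frob F n
      rw [PadicInt.norm_def] at this
      calc ‖(((F ^ p).coeff n : ℤ_[p]) : ℚ_[p])
            - (((Polynomial.expand ℤ_[p] p F).coeff n : ℤ_[p]) : ℚ_[p])‖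
          = ‖(((F ^ p).coeff n - (Polynomial.expand ℤ_[p] p F).coeff n : ℤ_[p]) : ℚ_[p])‖ := by
            push_cast; ring_nf
        _ ≤ (p:ℝ)⁻¹ := this
    -- key3 : expand coefficient value
    have key3 : (((Polynomial.expand ℤ_[p] p F).coeff n : ℤ_[p]) : ℚ_[p])
        = if p ∣ n then ((coeff (n / p) E : ℚ) : ℚ_[p]) else 0 := by
      rw [Polynomial.coeff_expand hp0]
      have hlt : n / p < n := Nat.div_lt_self hn hp.out.one_lt
      rw [hFcoeff, if_pos hlt, hbdef]
      simp only [dif_pos hlt]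
      split_ifs with h
      · simp only [hlt, ↓reduceDIte]
      · rfl
    -- key 4 : FE and coefficient split
    have hfe := ah_FE E hE0 hE
    have hT0 : coeff 0 (rescale (p:ℚ) (exp ℚ)) = 1 := by
      rw [coeff_rescale, coeff_exp]; simp
    have hSn : coeff n (ahS p E) = if p ∣ n then coeff (n / p) E else 0 := by
      rw [ahS, coeff_mk]
    have hmem : ((n, 0) : ℕ × ℕ) ∈ antidiagonal n := Finset.HasAntidiagonal.mem_antidiagonal.mpr (by simp)
    have hsplit : coeff n (E ^ p)
        = (if p ∣ n then coeff (n / p) E else 0)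
          + ∑ x ∈ (antidiagonal n).erase (n, 0),
              coeff x.1 (ahS p E) * coeff x.2 (rescale (p:ℚ) (exp ℚ)) := by
      rw [hfe, coeff_mul, ← Finset.add_sum_erase _ _ hmem]
      simp only [hT0, mul_one, hSn]
    -- bound on the tail sum
    set Δ : ℚ := ∑ x ∈ (antidiagonal n).erase (n, 0),
        coeff x.1 (ahS p E) * coeff x.2 (rescale (p:ℚ) (exp ℚ)) with hΔdef
    have hΔ : ‖((Δ : ℚ) : ℚ_[p])‖ ≤ (p:ℝ)⁻¹ := by
      rw [hΔdef]
      push_cast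
      apply IsUltrametricDist.norm_sum_le_of_forall_le_of_nonneg hp1R.le
      intro x hx
      have hxa := Finset.HasAntidiagonal.mem_antidiagonal.mp (Finset.mem_of_mem_erase hx)
      have hxne := Finset.ne_of_mem_erase hx
      have hx2 : x.2 ≠ 0 := by
        intro h0
        apply hxne
        have : x.1 = n := by omega
        rw [Prod.ext_iff]
        exact ⟨this, h0⟩
      rw [norm_mul]
      have hS : ‖((coeff x.1 (ahS p E) : ℚ) : ℚ_[p])‖ ≤ 1 := by
        rw [ahS, coeff_mk]
        split_ifs with h
        · have : x.1 / p < n := by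
            have h1 : x.1 / p ≤ n / p := Nat.div_le_div_right (by omega)
            have h2 : n / p < n := Nat.div_lt_self hn hp.out.one_lt
            omega
          exact IH _ this
        · simp
      have hT : ‖((coeff x.2 (rescale (p:ℚ) (exp ℚ)) : ℚ) : ℚ_[p])‖ ≤ (p:ℝ)⁻¹ := by
        have hTv : coeff x.2 (rescale (p:ℚ) (exp ℚ)) = (p:ℚ) ^ x.2 / x.2 ! := by
          rw [coeff_rescale, coeff_exp]
          simp [div_eq_mul_inv]
        rw [hTv]
        exact ah_norm_p_pow_div_factorial hx2
      calc ‖((coeff x.1 (ahS p E) : ℚ) : ℚ_[p])‖ * ‖((coeff x.2 (rescale (p:ℚ) (exp ℚ)) : ℚ) : ℚ_[p])‖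
          ≤ 1 * (p:ℝ)⁻¹ := by
            apply mul_le_mul hS hT (norm_nonneg _) (by norm_num)
        _ = (p:ℝ)⁻¹ := one_mul _
    -- assemble
    have htr := ah_coeff_pow_trunc p E hE0 (show 1 ≤ n from hn)
    have hmain : ((p:ℚ_[p])) * ((coeff n E : ℚ) : ℚ_[p])
        = ((Δ : ℚ) : ℚ_[p])
          - ((((F ^ p).coeff n : ℤ_[p]) : ℚ_[p])
            - (((Polynomial.expand ℤ_[p] p F).coeff n : ℤ_[p]) : ℚ_[p])) := by
      have hq : (p : ℚ) * coeff n E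
          = coeff n (E ^ p) - coeff n ((trunc n E : PowerSeries ℚ) ^ p) := by
        rw [htr]; ring
      have hcast := congrArg (fun q : ℚ => (q : ℚ_[p])) hq
      simp only [Rat.cast_mul, Rat.cast_sub, Rat.cast_natCast] at hcast
      rw [hcast, key1, key3, hsplit]
      have : ((((if p ∣ n then coeff (n / p) E else 0) + Δ : ℚ)) : ℚ_[p])
          = (if p ∣ n then ((coeff (n / p) E : ℚ) : ℚ_[p]) else 0) + ((Δ : ℚ) : ℚ_[p]) := by
        push_cast [apply_ite (fun q : ℚ => (q : ℚ_[p]))]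
        ring
      rw [this]
      ring
    have hnorm : ‖((p:ℚ_[p])) * ((coeff n E : ℚ) : ℚ_[p])‖ ≤ (p:ℝ)⁻¹ := by
      rw [hmain, sub_eq_add_neg]
      apply le_trans (Padic.nonarchimedean _ _)
      apply max_le hΔ
      rw [norm_neg]
      exact key2
    rw [norm_mul, Padic.norm_p] at hnorm
    calc ‖((coeff n E : ℚ) : ℚ_[p])‖
        = (p:ℝ) * ((p:ℝ)⁻¹ * ‖((coeff n E : ℚ) : ℚ_[p])‖) := by
          field_simp
      _ ≤ (p:ℝ) * (p:ℝ)⁻¹ := by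
          apply mul_le_mul_of_nonneg_left hnorm (by positivity)
      _ = 1 := by field_simp

end AH4


/-- **p-integrality of the Artin–Hasse exponential.**
Let `h ∈ ℚ⟦X⟧` have `m`-th coefficient `1` if `m` is a power of `p` and `0` otherwise, and
let `E ∈ ℚ⟦X⟧` have constant coefficient `1` and satisfy `X · E' = h · E` (so
`E = exp(X + X^p/p + X^{p²}/p² + ⋯)` is the Artin–Hasse exponential).  Then every
coefficient of `E` is `p`-integral: its denominator in lowest terms is not divisible
by `p`. -/
theorem artinHasse_coeff_p_integral (p : ℕ) (hp : p.Prime) (E : PowerSeries ℚ)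
    (hE0 : constantCoeff E = 1)
    (hE : X * PowerSeries.derivative ℚ E =
      (PowerSeries.mk fun m : ℕ => if ∃ k : ℕ, m = p ^ k then (1 : ℚ) else 0) * E) :
    ∀ k : ℕ, ¬ p ∣ (coeff k E).den := by
  haveI : Fact p.Prime := ⟨hp⟩
  intro k
  have hE' : X * PowerSeries.derivative ℚ E = ahh p * E := by
    rw [ahh]; exact hE
  have h := ah_main E hE0 hE' k
  exact (ah_ratNorm_le_one_iff _).mp h
end

section
/- Let p be a prime and let n be a positive integer not divisible by p. Let f, g ∈ ℚ[[x]] be formal power series, each with constant coefficient 1, such that g^n = f. If every coefficient of f is p-integral (its denominator in lowest terms is not divisible by p), then every coefficient of g is p-integral. -/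
open PowerSeries

/-- The subring of `p`-integral rationals. -/
def pIntSubring (p : ℕ) (hp : p.Prime) : Subring ℚ where
  carrier := {x : ℚ | ¬ p ∣ x.den}
  one_mem' := by simp [hp.one_lt.ne', Nat.dvd_one]
  zero_mem' := by simp [hp.one_lt.ne', Nat.dvd_one]
  add_mem' := by
    intro a b ha hb hd
    rcases (hp.dvd_mul.mp (hd.trans (Rat.add_den_dvd a b))) with h | h
    exacts [ha h, hb h]
  mul_mem' := by
    intro a b ha hb hd
    rcases (hp.dvd_mul.mp (hd.trans (Rat.mul_den_dvd a b))) with h | h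
    exacts [ha h, hb h]
  neg_mem' := by
    intro a ha
    simpa [Rat.neg_den] using ha

/-- If `f, g ∈ ℚ⟦x⟧` have constant coefficient `1`, `g^n = f` for `n ≥ 1` not divisible by
the prime `p`, and every coefficient of `f` is `p`-integral, then every coefficient of `g`
is `p`-integral. -/
theorem nth_root_p_integral (p : ℕ) (hp : p.Prime) (n : ℕ) (hn : 1 ≤ n) (hpn : ¬ p ∣ n)
    (f g : PowerSeries ℚ) (hf0 : constantCoeff f = 1) (hg0 : constantCoeff g = 1)
    (hgf : g ^ n = f) (hf : ∀ k : ℕ, ¬ p ∣ (coeff k f).den) :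
    ∀ k : ℕ, ¬ p ∣ (coeff k g).den := by
  set S := pIntSubring p hp with hS
  have hmem : ∀ x : ℚ, x ∈ S ↔ ¬ p ∣ x.den := fun x => Iff.rfl
  suffices H : ∀ k : ℕ, coeff k g ∈ S by
    intro k; exact (hmem _).mp (H k)
  set h : PowerSeries ℚ := g - 1 with hh
  have hg : g = 1 + h := by ring
  have hh0 : coeff 0 h = 0 := by
    simp [hh, coeff_zero_eq_constantCoeff, hg0]
  intro k
  induction k using Nat.strong_induction_on with
  | _ k ih =>
  rcases Nat.eq_zero_or_pos k with rfl | hk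
  · rw [coeff_zero_eq_constantCoeff, hg0]; exact S.one_mem
  -- key claim: coeff k (h^m) ∈ S for m ≠ 1
  have key : ∀ m : ℕ, m ≠ 1 → coeff k (h ^ m) ∈ S := by
    intro m hm1
    rcases Nat.eq_zero_or_pos m with rfl | hm0
    · rw [pow_zero, coeff_one, if_neg (by omega)]; exact S.zero_mem
    have hm2 : 2 ≤ m := by omega
    rw [PowerSeries.coeff_pow]
    apply S.sum_mem
    intro l hl
    rw [Finset.mem_finsuppAntidiag] at hl
    by_cases hz : ∃ i ∈ Finset.range m, l i = 0
    · obtain ⟨i, hi, hli⟩ := hz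
      rw [Finset.prod_eq_zero hi (by rw [hli, hh0])]
      exact S.zero_mem
    · push_neg at hz
      apply S.prod_mem
      intro i hi
      have hipos : 1 ≤ l i := Nat.one_le_iff_ne_zero.mpr (hz i hi)
      have hlt : l i < k := by
        obtain ⟨j, hj, hij⟩ : ∃ j ∈ Finset.range m, j ≠ i := by
          rcases Finset.exists_mem_ne (s := Finset.range m) (by rw [Finset.card_range]; omega) i with ⟨j, hj, hij⟩
          exact ⟨j, hj, hij⟩
        have hsum : ∑ t ∈ Finset.range m, l t = k := hl.1
        have h1 : l i + l j ≤ ∑ t ∈ Finset.range m, l t := by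
          rw [← Finset.sum_filter_add_sum_filter_not (Finset.range m) (fun t => t = i ∨ t = j)]
          have : Finset.filter (fun t => t = i ∨ t = j) (Finset.range m) = {i, j} := by
            ext t
            simp only [Finset.mem_filter, Finset.mem_insert, Finset.mem_singleton]
            constructor
            · rintro ⟨_, h⟩; exact h
            · rintro (rfl | rfl) <;> simp [hi, hj, Finset.mem_range] at *
              <;> tauto
          rw [this, Finset.sum_pair (fun e => hij e.symm)]
          exact Nat.le_add_right _ _
        have := hz j hj
        omega
      have : coeff (l i) h = coeff (l i) g - coeff (l i) (1 : PowerSeries ℚ) := by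
        simp [hh]
      rw [this]
      refine S.sub_mem (ih _ hlt) ?_
      rw [coeff_one, if_neg (by omega)]
      exact S.zero_mem
  -- expand f_k via binomial
  have hexp : coeff k f
      = ∑ m ∈ Finset.range (n + 1), (n.choose m : ℚ) * coeff k (h ^ m) := by
    rw [← hgf, hg, add_comm (1 : PowerSeries ℚ) h, add_pow]
    rw [map_sum]
    refine Finset.sum_congr rfl fun m hm => ?_
    rw [one_pow, mul_one, mul_comm,
      show ((n.choose m : ℕ) : PowerSeries ℚ) = PowerSeries.C (n.choose m : ℚ) by
        push_cast; rfl,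
      coeff_C_mul]
  have h1mem : Finset.range (n + 1) = insert 1 ((Finset.range (n+1)).erase 1) := by
    rw [Finset.insert_erase (Finset.mem_range.mpr (by omega))]
  have hsplit : coeff k f = (n : ℚ) * coeff k g
      + ∑ m ∈ (Finset.range (n+1)).erase 1, (n.choose m : ℚ) * coeff k (h ^ m) := by
    rw [hexp]; nth_rewrite 1 [h1mem]; rw [Finset.sum_insert (Finset.notMem_erase _ _)]
    congr 2
    · rw [Nat.choose_one_right]
    · rw [pow_one]
      have : coeff k h = coeff k g - coeff k (1 : PowerSeries ℚ) := by simp [hh]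
      rw [this, coeff_one, if_neg (by omega), sub_zero]
  have hng : (n : ℚ) * coeff k g ∈ S := by
    have hE : ∑ m ∈ (Finset.range (n+1)).erase 1, (n.choose m : ℚ) * coeff k (h ^ m) ∈ S := by
      apply S.sum_mem
      intro m hm
      exact S.mul_mem (natCast_mem S _) (key m (Finset.ne_of_mem_erase hm))
    have : (n : ℚ) * coeff k g = coeff k f - _ := eq_sub_of_add_eq hsplit.symm
    rw [this]
    exact S.sub_mem ((hmem _).mpr (hf k)) hE
  have hninv : ((n : ℚ))⁻¹ ∈ S := by
    rw [hmem, Rat.inv_natCast_den_of_pos (by omega)]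
    exact hpn
  have hne : (n : ℚ) ≠ 0 := by positivity
  have : coeff k g = (n : ℚ)⁻¹ * ((n : ℚ) * coeff k g) := by
    field_simp
  rw [this]
  exact S.mul_mem hninv hng
end
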